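/- arXiv:1602.06239 — 11 statements merged into one kernel-verified Lean document; each statement's English description precedes it below -/
import Mathlib

section
/- For all real numbers x, y and every real r > 0, setting u = √((x−1)² + y²), v = √(x² + (y+1)²), a = x + y and c = x − y − 1, one has |r − u| − |r − v| ≤ 0 if and only if a + (r/√2)·(√((a−1)² + c²) − √((a+1)² + c²)) ≥ 0. (This is the exact simplification of the cost function of the signum algorithm: the sign of Δ = |r − u| − |r − v| is opposite to the sign of a + (r/√2)(√((a−1)²+c²) − √((a+1)²+c²)).) -/
/-! The candidate points lie at distances `u = √((x-1)² + y²)` and `v = √(x² + (y+1)²)` from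
the origin. Comparing `|r - u|` with `|r - v|` amounts to
comparing squares, where the `r²` terms cancel and leave `v² - u² + 2r(u - v) ≥ 0`; here
`v² - u² = 2(x + y)`. The square roots in `a, c` are `u, v` after the rotation
`(p, q) ↦ (p + q, p - q)`, which scales lengths by `√2`. -/

open Real

theorem sqrt_add_sq_add_sub_sq (p q : ℝ) :
    √((p + q) ^ 2 + (p - q) ^ 2) = √2 * √(p ^ 2 + q ^ 2) := by
  rw [← sqrt_mul zero_le_two]
  ring_nf

theorem abs_sub_abs_nonpos_iff_sq_le (a b : ℝ) : |a| - |b| ≤ 0 ↔ a ^ 2 ≤ b ^ 2 :=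
  sub_nonpos.trans sq_le_sq.symm

theorem sq_sub_le_sq_sub_iff (r u v : ℝ) :
    (r - u) ^ 2 ≤ (r - v) ^ 2 ↔ 0 ≤ (v ^ 2 - u ^ 2) / 2 + r * (u - v) := by
  constructor <;> intro h <;> linarith

theorem cost_nonpos_iff_general (x y r : ℝ) :
    |r - Real.sqrt ((x - 1) ^ 2 + y ^ 2)| - |r - Real.sqrt (x ^ 2 + (y + 1) ^ 2)| ≤ 0 ↔
      0 ≤ (x + y) + (r / Real.sqrt 2) *
        (Real.sqrt (((x + y) - 1) ^ 2 + (x - y - 1) ^ 2) -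
          Real.sqrt (((x + y) + 1) ^ 2 + (x - y - 1) ^ 2)) := by
  set u := √((x - 1) ^ 2 + y ^ 2)
  set v := √(x ^ 2 + (y + 1) ^ 2)
  have hu : √((x + y - 1) ^ 2 + (x - y - 1) ^ 2) = √2 * u := by
    convert sqrt_add_sq_add_sub_sq (x - 1) y using 3 <;> ring
  have hv : √((x + y + 1) ^ 2 + (x - y - 1) ^ 2) = √2 * v := by
    convert sqrt_add_sq_add_sub_sq x (y + 1) using 3 <;> ring
  have hscale : r / √2 * (√2 * u - √2 * v) = r * (u - v) := by
    field_simp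
  have hsq : x + y = (v ^ 2 - u ^ 2) / 2 := by
    rw [sq_sqrt (by positivity), sq_sqrt (by positivity)]
    ring
  rw [hu, hv, hscale, hsq, abs_sub_abs_nonpos_iff_sq_le, sq_sub_le_sq_sub_iff]

/-- Exact simplification of the cost function of the signum algorithm:
for `r > 0` and any reals `x, y`, with `a = x + y` and `c = x - y - 1`,
the cost `Δ = |r - √((x-1)² + y²)| - |r - √(x² + (y+1)²)|` satisfies `Δ ≤ 0`
if and only if `a + (r/√2)·(√((a-1)² + c²) - √((a+1)² + c²)) ≥ 0`. -/
theorem cost_nonpos_iff (x y r : ℝ) (hr : 0 < r) :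
    |r - Real.sqrt ((x - 1) ^ 2 + y ^ 2)| - |r - Real.sqrt (x ^ 2 + (y + 1) ^ 2)| ≤ 0 ↔
      0 ≤ (x + y) + (r / Real.sqrt 2) *
        (Real.sqrt (((x + y) - 1) ^ 2 + (x - y - 1) ^ 2) -
          Real.sqrt (((x + y) + 1) ^ 2 + (x - y - 1) ^ 2)) :=
  cost_nonpos_iff_general x y r
end

section
/- For every real number x with |x| ≤ 1, (√(1−x) − √(1+x))² = Σ_{k=1}^{∞} C(2(k−1), k−1) · (4 / (2^{2k} · k)) · x^{2k}, where C(n, m) denotes the binomial coefficient. -/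
/-!
With `t = x²` the left side is `2 - 2√(1 - t)`, and the right side is `S = t · C(t/4)`, where
`C(y) = ∑ catalan n · yⁿ` satisfies `y C² + 1 = C` by the Catalan recurrence. Hence
`S² = 4 (S - t)`, i.e. `(2 - S)² = 4 (1 - t)`, and `S ≤ C(1/4) = 2` selects the root
`S = 2 - 2√(1 - t)`. The value `C(1/4) = 2`, which also gives convergence for all `|x| ≤ 1`,
comes from telescoping `catalan n / 4ⁿ = 2 (aₙ - aₙ₊₁)` with `aₙ = centralBinom n / 4ⁿ`,
where `aₙ² (n + 1) ≤ 1` forces `aₙ → 0`.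
-/

open Finset Filter Topology

theorem tsum_catalan_mul_pow_sq_mul_add_one {R : Type*} [NormedCommRing R] [CompleteSpace R]
    {y : R} (h : Summable fun n => ‖(catalan n : R) * y ^ n‖) :
    (∑' n, (catalan n : R) * y ^ n) ^ 2 * y + 1 = ∑' n, (catalan n : R) * y ^ n := by
  have hconv : ∀ n, (∑ kl ∈ antidiagonal n,
      (catalan kl.1 : R) * y ^ kl.1 * (catalan kl.2 * y ^ kl.2)) * y
      = catalan (n + 1) * y ^ (n + 1) := by
    intro n
    rw [catalan_succ', Nat.cast_sum, sum_mul, sum_mul]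
    refine sum_congr rfl fun kl hkl => ?_
    rw [← mem_antidiagonal.mp hkl]
    push_cast
    ring
  have hprod := (summable_norm_sum_mul_antidiagonal_of_summable_norm h h).of_norm
  rw [sq, tsum_mul_tsum_eq_tsum_sum_antidiagonal_of_summable_norm h h,
    ← hprod.tsum_mul_right, tsum_congr hconv, h.of_norm.tsum_eq_zero_add]
  simp [add_comm]

theorem centralBinom_succ_div_four_pow_succ (n : ℕ) :
    ((n + 1).centralBinom : ℝ) / 4 ^ (n + 1) =
      (n.centralBinom : ℝ) / 4 ^ n * ((2 * n + 1) / (2 * n + 2)) := by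
  have hB : ((n : ℝ) + 1) * (n + 1).centralBinom = 2 * (2 * n + 1) * n.centralBinom := by
    exact_mod_cast Nat.succ_mul_centralBinom_succ n
  have hn : (n : ℝ) + 1 ≠ 0 := by positivity
  rw [pow_succ]
  field_simp
  linear_combination 2 * hB

theorem catalan_div_four_pow_eq_two_mul_sub (n : ℕ) :
    (catalan n : ℝ) / 4 ^ n =
      2 * ((n.centralBinom : ℝ) / 4 ^ n - ((n + 1).centralBinom : ℝ) / 4 ^ (n + 1)) := by
  have hC : ((n : ℝ) + 1) * catalan n = n.centralBinom := by
    exact_mod_cast succ_mul_catalan_eq_centralBinom n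
  have hn : (n : ℝ) + 1 ≠ 0 := by positivity
  rw [centralBinom_succ_div_four_pow_succ, ← hC]
  field_simp
  ring

theorem centralBinom_div_four_pow_sq_mul_le_one (n : ℕ) :
    ((n.centralBinom : ℝ) / 4 ^ n) ^ 2 * (n + 1) ≤ 1 := by
  induction n with
  | zero => simp
  | succ n ih =>
    have hfactor : ((2 * n + 1) / (2 * n + 2)) ^ 2 * ((n : ℝ) + 2) ≤ n + 1 := by
      rw [div_pow, div_mul_eq_mul_div, div_le_iff₀ (by positivity)]
      nlinarith
    rw [centralBinom_succ_div_four_pow_succ]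
    push_cast
    calc _ = ((n.centralBinom : ℝ) / 4 ^ n) ^ 2 * (((2 * n + 1) / (2 * n + 2)) ^ 2 * (n + 2)) := by
          ring
      _ ≤ ((n.centralBinom : ℝ) / 4 ^ n) ^ 2 * (n + 1) := by gcongr
      _ ≤ 1 := ih

theorem tendsto_centralBinom_div_four_pow :
    Tendsto (fun n : ℕ => (n.centralBinom : ℝ) / 4 ^ n) atTop (𝓝 0) := by
  have hle : ∀ n : ℕ, (n.centralBinom : ℝ) / 4 ^ n ≤ √(1 / (n + 1)) := fun n =>
    Real.le_sqrt_of_sq_le <| (le_div_iff₀ (by positivity)).mpr <|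
      centralBinom_div_four_pow_sq_mul_le_one n
  have hsqrt : Tendsto (fun n : ℕ => √(1 / ((n : ℝ) + 1))) atTop (𝓝 0) := by
    simpa using tendsto_one_div_add_atTop_nhds_zero_nat.sqrt
  exact tendsto_of_tendsto_of_tendsto_of_le_of_le tendsto_const_nhds hsqrt
    (fun n => by positivity) hle

theorem hasSum_catalan_div_four_pow : HasSum (fun n => (catalan n : ℝ) / 4 ^ n) 2 := by
  rw [hasSum_iff_tendsto_nat_of_nonneg (fun n => by positivity)]
  have hpartial : ∀ n, ∑ i ∈ range n, (catalan i : ℝ) / 4 ^ i =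
      2 - 2 * ((n.centralBinom : ℝ) / 4 ^ n) := by
    intro n
    simp_rw [catalan_div_four_pow_eq_two_mul_sub, ← mul_sum]
    rw [sum_range_sub' (fun i => (i.centralBinom : ℝ) / 4 ^ i)]
    simp [mul_sub]
  simp_rw [hpartial]
  simpa using (tendsto_centralBinom_div_four_pow.const_mul 2).const_sub 2

theorem hasSum_catalan_div_four_pow_mul_pow_succ {t : ℝ} (ht₀ : 0 ≤ t) (ht₁ : t ≤ 1) :
    HasSum (fun n => (catalan n : ℝ) / 4 ^ n * t ^ (n + 1)) (2 - 2 * √(1 - t)) := by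
  have hle : ∀ n, (catalan n : ℝ) * (t / 4) ^ n ≤ catalan n / 4 ^ n := fun n => by
    rw [div_pow, ← mul_div_assoc]
    exact div_le_div_of_nonneg_right
      (mul_le_of_le_one_right (by positivity) (pow_le_one₀ ht₀ ht₁)) (by positivity)
  have hsum : Summable fun n => (catalan n : ℝ) * (t / 4) ^ n :=
    hasSum_catalan_div_four_pow.summable.of_nonneg_of_le (fun n => by positivity) hle
  set C := ∑' n, (catalan n : ℝ) * (t / 4) ^ n
  have hC : C ^ 2 * (t / 4) + 1 = C :=
    tsum_catalan_mul_pow_sq_mul_add_one (summable_norm_iff.mpr hsum)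
  have hC_le : C ≤ 2 := hasSum_catalan_div_four_pow.tsum_eq ▸ hsum.tsum_le_tsum hle
    hasSum_catalan_div_four_pow.summable
  have hC_nonneg : 0 ≤ C := tsum_nonneg fun n => by positivity
  have htC_le : t * C ≤ 2 := by nlinarith
  have hsqrt : √(1 - t) = 1 - t * C / 2 := by
    rw [Real.sqrt_eq_iff_mul_self_eq (by linarith) (by linarith)]
    linear_combination (-t) * hC
  rw [hsqrt, show 2 - 2 * (1 - t * C / 2) = t * C by ring]
  refine (hsum.hasSum.mul_left t).congr_fun fun n => ?_
  rw [div_pow, pow_succ]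
  field_simp

theorem sqrt_one_sub_sub_sqrt_one_add_sq {x : ℝ} (hx : |x| ≤ 1) :
    (√(1 - x) - √(1 + x)) ^ 2 = 2 - 2 * √(1 - x ^ 2) := by
  obtain ⟨hx₁, hx₂⟩ := abs_le.mp hx
  rw [sub_sq, Real.sq_sqrt (by linarith), Real.sq_sqrt (by linarith), mul_assoc,
    ← Real.sqrt_mul (by linarith), show (1 - x) * (1 + x) = 1 - x ^ 2 by ring]
  ring

theorem choose_two_mul_mul_four_div_eq_catalan_div (k : ℕ) :
    ((2 * k).choose k : ℝ) * (4 / (2 ^ (2 * (k + 1)) * (k + 1))) = catalan k / 4 ^ k := by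
  have hC : ((k : ℝ) + 1) * catalan k = (2 * k).choose k := by
    exact_mod_cast
      (succ_mul_catalan_eq_centralBinom k).trans (Nat.centralBinom_eq_two_mul_choose k)
  rw [← hC, pow_mul, pow_succ]
  have hk : (k : ℝ) + 1 ≠ 0 := by positivity
  field_simp
  norm_num

/-- For `|x| ≤ 1`,
`(√(1-x) - √(1+x))² = Σ_{k=1}^∞ C(2(k-1), k-1) · (4 / (2^{2k} k)) · x^{2k}`.
The sum over `k ≥ 1` is reindexed as a sum over `k : ℕ` via `k ↦ k + 1`. -/
theorem sqrt_diff_sq_series (x : ℝ) (hx : |x| ≤ 1) :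
    HasSum
      (fun k : ℕ =>
        (Nat.choose (2 * k) k : ℝ) * (4 / (2 ^ (2 * (k + 1)) * (k + 1))) * x ^ (2 * (k + 1)))
      ((Real.sqrt (1 - x) - Real.sqrt (1 + x)) ^ 2) := by
  rw [sqrt_one_sub_sub_sqrt_one_add_sq hx]
  simp_rw [choose_two_mul_mul_four_div_eq_catalan_div, pow_mul]
  exact hasSum_catalan_div_four_pow_mul_pow_succ (sq_nonneg x)
    ((sq_le_one_iff_abs_le_one x).mpr hx)
end

section
/- Let A(r) = (2/r) · Σ_{n=0}^{2r−1} 1 / (cos(nπ/(4r)) + sin(nπ/(4r))) for positive integers r. Then as r → ∞, A(r) converges to (4√2/π) · (ln(2+√2) − ln(2−√2)) (≈ 3.17406), which equals (8√2/π)·arctanh(1/√2). -/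
/-!
With `f x = 1 / (cos x + sin x)` and mesh `π / (4r)`, the mean `A(r)` is `8 / π` times the
left Riemann sum of `f` on `[0, π/2]` with `2r` subintervals, so it tends to
`8 / π * ∫₀^{π/2} f`. As `cos x + sin x = √2 cos (x - π/4)`, the function `f` has the
elementary primitive `√2/4 · log ((2 + √2 (sin x - cos x)) / (2 - √2 (sin x - cos x)))`,
which gives `∫₀^{π/2} f = √2/2 · (log (2 + √2) - log (2 - √2))`.
-/

open Filter Real Set Topology intervalIntegral

noncomputable def leftRiemannSum (f : ℝ → ℝ) (a b : ℝ) (N : ℕ) : ℝ :=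
  ∑ n ∈ Finset.range N, (b - a) / N * f (a + n * ((b - a) / N))

lemma abs_mul_sub_integral_le {f : ℝ → ℝ} {a h C : ℝ} (hh : 0 ≤ h)
    (hf : IntervalIntegrable f MeasureTheory.volume a (a + h))
    (hC : ∀ x ∈ Icc a (a + h), |f a - f x| ≤ C) :
    |h * f a - ∫ x in a..a + h, f x| ≤ C * h := by
  have hconst : h * f a = ∫ _ in a..a + h, f a := by simp
  rw [hconst, ← integral_sub intervalIntegrable_const hf]
  have hbound : ∀ x ∈ uIoc a (a + h), ‖f a - f x‖ ≤ C := fun x hx =>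
    hC x (Ioc_subset_Icc_self (uIoc_of_le (le_add_of_nonneg_right hh) ▸ hx))
  simpa [abs_of_nonneg hh] using norm_integral_le_of_norm_le_const hbound

lemma abs_leftRiemannSum_sub_integral_le {f : ℝ → ℝ} {a b C : ℝ} {N : ℕ} (hab : a ≤ b)
    (hN : 0 < N) (hf : ContinuousOn f (Icc a b))
    (hC : ∀ x ∈ Icc a b, ∀ y ∈ Icc a b, |x - y| ≤ (b - a) / N → |f x - f y| ≤ C) :
    |leftRiemannSum f a b N - ∫ x in a..b, f x| ≤ C * (b - a) := by
  set h := (b - a) / N with h_def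
  have hh : 0 ≤ h := div_nonneg (by linarith) N.cast_nonneg
  have hNh : N * h = b - a := by rw [h_def]; field_simp
  set x : ℕ → ℝ := fun n => a + n * h with x_def
  have hx_succ (n : ℕ) : x (n + 1) = x n + h := by simp only [x_def]; push_cast; ring
  have hx_mem {n : ℕ} (hn : n ≤ N) : x n ∈ Icc a b := by
    have : (n : ℝ) * h ≤ N * h := by gcongr
    exact ⟨le_add_of_nonneg_right (by positivity), by linarith⟩
  have hpiece {n : ℕ} (hn : n < N) : Icc (x n) (x n + h) ⊆ Icc a b := by
    rw [← hx_succ]; exact Icc_subset_Icc (hx_mem hn.le).1 (hx_mem hn).2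
  have hint {n : ℕ} (hn : n < N) : IntervalIntegrable f MeasureTheory.volume (x n) (x n + h) :=
    (hf.mono (hpiece hn)).intervalIntegrable_of_Icc (by linarith)
  have hsplit : ∫ t in a..b, f t = ∑ n ∈ Finset.range N, ∫ t in x n..x n + h, f t := by
    simp_rw [← hx_succ]
    rw [sum_integral_adjacent_intervals fun n hn => hx_succ n ▸ hint hn]
    simp only [x_def]; rw [hNh]; simp
  calc |leftRiemannSum f a b N - ∫ t in a..b, f t|
      = |∑ n ∈ Finset.range N, (h * f (x n) - ∫ t in x n..x n + h, f t)| := by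
        rw [hsplit, Finset.sum_sub_distrib]; rfl
    _ ≤ ∑ n ∈ Finset.range N, |h * f (x n) - ∫ t in x n..x n + h, f t| :=
        Finset.abs_sum_le_sum_abs _ _
    _ ≤ ∑ _n ∈ Finset.range N, C * h := by
        refine Finset.sum_le_sum fun n hn => abs_mul_sub_integral_le hh (hint ?_) fun t ht => ?_
        · exact Finset.mem_range.mp hn
        have hn := Finset.mem_range.mp hn
        refine hC _ (hx_mem hn.le) _ (hpiece hn ht) ?_
        rw [abs_sub_comm, abs_of_nonneg (by linarith [ht.1])]
        linarith [ht.2]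
    _ = C * (b - a) := by rw [Finset.sum_const, Finset.card_range, nsmul_eq_mul, ← hNh]; ring

theorem tendsto_leftRiemannSum {f : ℝ → ℝ} {a b : ℝ} (hab : a ≤ b)
    (hf : ContinuousOn f (Icc a b)) :
    Tendsto (leftRiemannSum f a b) atTop (𝓝 (∫ x in a..b, f x)) := by
  rw [Metric.tendsto_nhds]
  intro ε hε
  have hε' : 0 < ε / (b - a + 1) := by positivity
  obtain ⟨δ, hδ, hfδ⟩ :=
    Metric.uniformContinuousOn_iff_le.mp (isCompact_Icc.uniformContinuousOn_of_continuous hf) _ hε'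
  filter_upwards [eventually_gt_atTop 0,
    (tendsto_const_div_atTop_nhds_zero_nat (b - a)).eventually (ge_mem_nhds hδ)] with N hN hNδ
  calc dist (leftRiemannSum f a b N) (∫ x in a..b, f x)
      ≤ ε / (b - a + 1) * (b - a) :=
        abs_leftRiemannSum_sub_integral_le hab hN hf fun x hx y hy hxy =>
          hfδ x hx y hy (hxy.trans hNδ)
    _ < ε := by rw [div_mul_eq_mul_div, div_lt_iff₀ (by linarith)]; nlinarith

lemma one_le_cos_add_sin {x : ℝ} (hx : x ∈ Icc 0 (π / 2)) : 1 ≤ cos x + sin x := by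
  have hs : 0 ≤ sin x := sin_nonneg_of_nonneg_of_le_pi hx.1 (by linarith [hx.2, pi_pos])
  have hc : 0 ≤ cos x := cos_nonneg_of_mem_Icc ⟨by linarith [hx.1, pi_pos], hx.2⟩
  nlinarith [sin_sq_add_cos_sq x]

lemma continuousOn_inv_cos_add_sin :
    ContinuousOn (fun x => 1 / (cos x + sin x)) (Icc 0 (π / 2)) :=
  continuousOn_const.div (by fun_prop) fun x hx => by linarith [one_le_cos_add_sin hx]

lemma sq_sin_sub_cos_add_sq_cos_add_sin (x : ℝ) :
    (sin x - cos x) ^ 2 + (cos x + sin x) ^ 2 = 2 := by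
  linear_combination 2 * sin_sq_add_cos_sq x

lemma hasDerivAt_primitive_inv_cos_add_sin {x : ℝ} (hx : cos x + sin x ≠ 0) :
    HasDerivAt
      (fun y => √2 / 4 * (log (2 + √2 * (sin y - cos y)) - log (2 - √2 * (sin y - cos y))))
      (1 / (cos x + sin x)) x := by
  have h2 : √2 ^ 2 = 2 := sq_sqrt zero_le_two
  have hpos : 0 < (cos x + sin x) ^ 2 := by positivity
  have hsq := sq_sin_sub_cos_add_sq_cos_add_sin x
  set u := sin x - cos x
  have hprod : (2 + √2 * u) * (2 - √2 * u) = 2 * (cos x + sin x) ^ 2 := by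
    linear_combination (-u ^ 2) * h2 - 2 * hsq
  have hu : |√2 * u| < 2 := by
    rw [← sq_lt_sq₀ (abs_nonneg _) zero_le_two, sq_abs, mul_pow, h2]; linarith
  have hplus : 0 < 2 + √2 * u := by linarith [neg_abs_le (√2 * u)]
  have hminus : 0 < 2 - √2 * u := by linarith [le_abs_self (√2 * u)]
  have hu' : HasDerivAt (fun y => √2 * (sin y - cos y)) (√2 * (cos x + sin x)) x :=
    ((hasDerivAt_sin x).sub (hasDerivAt_cos x)).const_mul √2 |>.congr_deriv (by ring)
  refine ((((hu'.const_add 2).log hplus.ne').sub ((hu'.const_sub 2).log hminus.ne')).const_mul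
    (√2 / 4)).congr_deriv ?_
  show √2 / 4 * (√2 * (cos x + sin x) / (2 + √2 * u) - -(√2 * (cos x + sin x)) / (2 - √2 * u)) =
    1 / (cos x + sin x)
  rw [div_sub_div _ _ hplus.ne' hminus.ne', hprod]
  field_simp
  linear_combination 4 * h2

lemma integral_inv_cos_add_sin :
    ∫ x in 0..π / 2, 1 / (cos x + sin x) = √2 / 2 * (log (2 + √2) - log (2 - √2)) := by
  have hpi : (0 : ℝ) ≤ π / 2 := by positivity
  rw [integral_eq_sub_of_hasDerivAt (fun x hx => hasDerivAt_primitive_inv_cos_add_sin ?_)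
    (continuousOn_inv_cos_add_sin.intervalIntegrable_of_Icc hpi)]
  · simp only [sin_pi_div_two, cos_pi_div_two, sin_zero, cos_zero]
    ring_nf
  · rw [uIcc_of_le hpi] at hx
    linarith [one_le_cos_add_sin hx]

lemma mean_eq_mul_leftRiemannSum (r : ℕ) :
    2 / (r : ℝ) * ∑ n ∈ Finset.range (2 * r),
        1 / (cos (n * π / (4 * r)) + sin (n * π / (4 * r))) =
      8 / π * leftRiemannSum (fun x => 1 / (cos x + sin x)) 0 (π / 2) (2 * r) := by
  rw [leftRiemannSum, Finset.mul_sum, Finset.mul_sum]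
  refine Finset.sum_congr rfl fun n _ => ?_
  push_cast
  field_simp
  ring_nf

/-- The arithmetic mean
`A(r) = (2/r) Σ_{n=0}^{2r-1} 1/(cos(nπ/(4r)) + sin(nπ/(4r)))` of the π-values of the
parametric discretization of a circle of radius `r` converges, as the positive integer
`r` tends to infinity, to `(4√2/π)·(ln(2+√2) - ln(2-√2))`. -/
theorem mean_pi_parametric_discretization_tendsto :
    Tendsto
      (fun r : ℕ =>
        (2 / (r : ℝ)) * ∑ n ∈ Finset.range (2 * r),
          1 / (Real.cos (n * Real.pi / (4 * r)) + Real.sin (n * Real.pi / (4 * r))))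
      atTop
      (nhds ((4 * Real.sqrt 2 / Real.pi) *
        (Real.log (2 + Real.sqrt 2) - Real.log (2 - Real.sqrt 2)))) := by
  have hRiemann := ((tendsto_leftRiemannSum (by positivity) continuousOn_inv_cos_add_sin).comp
    (tendsto_id.const_mul_atTop' two_pos)).const_mul (8 / π)
  rw [integral_inv_cos_add_sin] at hRiemann
  convert hRiemann using 2
  · exact mean_eq_mul_leftRiemannSum _
  · ring
end

section
/- Fix an integer r ≥ 1 and let x, y, s be the sequences produced by the signum algorithm for radius r. Then x_{2r} = 0 and y_{2r} = r; equivalently, S_{2r−1} = Σ_{k=0}^{2r−1} s_k = 0, so the digital quarter-circle path starting at (r, 0) reaches (0, r) after exactly 2r steps. -/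
/-- The cost function `Δ` of the signum algorithm at the point `(x, y)` for radius `r`:
`Δ = |r - √((x-1)² + y²)| - |r - √(x² + (y+1)²)|`. -/
noncomputable def sigDelta (r : ℕ) (x y : ℤ) : ℝ :=
  |(r : ℝ) - Real.sqrt (((x : ℝ) - 1) ^ 2 + (y : ℝ) ^ 2)| -
    |(r : ℝ) - Real.sqrt ((x : ℝ) ^ 2 + ((y : ℝ) + 1) ^ 2)|

/-- The step sign of the signum algorithm: `s = -1` if `Δ ≤ 0`, and `s = 1` if `Δ > 0`. -/
noncomputable def sigStep (r : ℕ) (x y : ℤ) : ℤ :=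
  if sigDelta r x y ≤ 0 then -1 else 1

/-- The points `(x_n, y_n)` of the digital quarter circle of radius `r` produced by the
signum algorithm: `(x₀, y₀) = (r, 0)`, and `(x_{n+1}, y_{n+1}) = (x_n - 1, y_n)` if
`s_n = -1`, `(x_{n+1}, y_{n+1}) = (x_n, y_n + 1)` if `s_n = 1`. -/
noncomputable def sigPt (r : ℕ) : ℕ → ℤ × ℤ
  | 0 => ((r : ℤ), 0)
  | n + 1 =>
    if sigStep r (sigPt r n).1 (sigPt r n).2 = -1
    then ((sigPt r n).1 - 1, (sigPt r n).2)
    else ((sigPt r n).1, (sigPt r n).2 + 1)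

/-- The step sequence `s_n` of the signum algorithm for radius `r`. -/
noncomputable def sigS (r : ℕ) (n : ℕ) : ℤ :=
  sigStep r (sigPt r n).1 (sigPt r n).2

/-- The recursively constructed area under the digital quarter circle:
`𝒜₀ = 0`, `𝒜_{n+1} = 𝒜_n + x_n` if `s_n = 1`, and `𝒜_{n+1} = 𝒜_n` if `s_n = -1`. -/
noncomputable def sigArea (r : ℕ) : ℕ → ℤ
  | 0 => 0
  | n + 1 =>
    if sigS r n = 1 then sigArea r n + (sigPt r n).1 else sigArea r n


private lemma my_le_sqrt {a b : ℝ} (ha : 0 ≤ a) (h : a ^ 2 ≤ b) : a ≤ Real.sqrt b := by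
  calc a = Real.sqrt (a ^ 2) := (Real.sqrt_sq ha).symm
    _ ≤ Real.sqrt b := Real.sqrt_le_sqrt h

private lemma my_sqrt_le {a b : ℝ} (hb : 0 ≤ b) (h : a ≤ b ^ 2) : Real.sqrt a ≤ b := by
  calc Real.sqrt a ≤ Real.sqrt (b ^ 2) := Real.sqrt_le_sqrt h
    _ = b := Real.sqrt_sq hb

private lemma my_sqrt_lt {a b : ℝ} (ha : 0 ≤ a) (hb : 0 ≤ b) (h : a < b ^ 2) : Real.sqrt a < b := by
  calc Real.sqrt a < Real.sqrt (b ^ 2) := Real.sqrt_lt_sqrt ha h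
    _ = b := Real.sqrt_sq hb

-- lemma C : at (x, r) with x ≥ 1, Δ ≤ 0
lemma sig_delta_y_top (r : ℕ) (x : ℤ) (hx : 1 ≤ x) : sigDelta r x (r : ℤ) ≤ 0 := by
  unfold sigDelta
  push_cast
  have hx' : (1:ℝ) ≤ (x:ℝ) := by exact_mod_cast hx
  have hr0 : (0:ℝ) ≤ (r:ℝ) := by positivity
  have hra : (r:ℝ) ≤ Real.sqrt (((x:ℝ) - 1)^2 + (r:ℝ)^2) := by
    exact my_le_sqrt hr0 (by nlinarith)
  have hrb : (r:ℝ) ≤ Real.sqrt ((x:ℝ)^2 + ((r:ℝ)+1)^2) := by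
    exact my_le_sqrt hr0 (by nlinarith)
  have hab : Real.sqrt (((x:ℝ) - 1)^2 + (r:ℝ)^2) ≤ Real.sqrt ((x:ℝ)^2 + ((r:ℝ)+1)^2) :=
    Real.sqrt_le_sqrt (by nlinarith)
  rw [abs_sub_comm (r:ℝ), abs_of_nonneg (by linarith), abs_sub_comm (r:ℝ), abs_of_nonneg (by linarith)]
  linarith

-- lemma B : at (0, y) with 1 ≤ y ≤ r - 1, Δ > 0
lemma sig_delta_x_zero (r : ℕ) (y : ℤ) (h1 : 1 ≤ y) (h2 : y ≤ (r:ℤ) - 1) :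
    0 < sigDelta r 0 y := by
  unfold sigDelta
  push_cast
  have h1' : (1:ℝ) ≤ (y:ℝ) := by exact_mod_cast h1
  have h2' : (y:ℝ) ≤ (r:ℝ) - 1 := by exact_mod_cast h2
  have hb : Real.sqrt ((0:ℝ)^2 + ((y:ℝ)+1)^2) = (y:ℝ) + 1 := by
    rw [show (0:ℝ)^2 + ((y:ℝ)+1)^2 = ((y:ℝ)+1)^2 by ring, Real.sqrt_sq (by linarith)]
  have ha1 : Real.sqrt (((0:ℝ) - 1)^2 + (y:ℝ)^2) ≤ (r:ℝ) := by
    exact my_sqrt_le (by linarith) (by nlinarith)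
  have ha2 : Real.sqrt (((0:ℝ) - 1)^2 + (y:ℝ)^2) < (y:ℝ) + 1 := by
    exact my_sqrt_lt (by positivity) (by linarith) (by nlinarith)
  rw [hb, abs_of_nonneg (by linarith), abs_of_nonneg (by linarith)]
  linarith

-- lemma A : at (r, 0), Δ > 0
lemma sig_delta_start (r : ℕ) (hr : 1 ≤ r) : 0 < sigDelta r (r : ℤ) 0 := by
  unfold sigDelta
  push_cast
  have hr' : (1:ℝ) ≤ (r:ℝ) := by exact_mod_cast hr
  have ha : Real.sqrt (((r:ℝ) - 1)^2 + (0:ℝ)^2) = (r:ℝ) - 1 := by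
    rw [show ((r:ℝ) - 1)^2 + (0:ℝ)^2 = ((r:ℝ)-1)^2 by ring, Real.sqrt_sq (by linarith)]
  have hb1 : (r:ℝ) ≤ Real.sqrt ((r:ℝ)^2 + ((0:ℝ)+1)^2) := by
    exact my_le_sqrt (by linarith) (by nlinarith)
  have hb2 : Real.sqrt ((r:ℝ)^2 + ((0:ℝ)+1)^2) < (r:ℝ) + 1 := by
    exact my_sqrt_lt (by positivity) (by linarith) (by nlinarith)
  rw [ha, abs_of_nonneg (by linarith), abs_sub_comm (r:ℝ), abs_of_nonneg (by linarith)]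
  linarith

private lemma sig_inv (r : ℕ) (hr : 1 ≤ r) :
    ∀ n, n ≤ 2 * r →
      ((r:ℤ) - (sigPt r n).1 + (sigPt r n).2 = n ∧ 0 ≤ (sigPt r n).1 ∧
        0 ≤ (sigPt r n).2 ∧ (sigPt r n).2 ≤ (r:ℤ) ∧ (1 ≤ n → 1 ≤ (sigPt r n).2)) := by
  intro n
  induction n with
  | zero =>
    intro _
    refine ⟨by simp [sigPt], by simp [sigPt], by simp [sigPt], by simp [sigPt], by omega⟩
  | succ n ih =>
    intro hn
    obtain ⟨h1, h2, h3, h4, h5⟩ := ih (by omega)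
    have hpt : sigPt r (n+1) =
        if sigStep r (sigPt r n).1 (sigPt r n).2 = -1
        then ((sigPt r n).1 - 1, (sigPt r n).2)
        else ((sigPt r n).1, (sigPt r n).2 + 1) := by
      simp only [sigPt]
    set x := (sigPt r n).1 with hx
    set y := (sigPt r n).2 with hy
    by_cases hx0 : x = 0
    · -- x = 0 : must step up
      have hn1 : 1 ≤ n := by omega
      have hy1 : 1 ≤ y := h5 hn1
      have hyr : y ≤ (r:ℤ) - 1 := by omega
      have hd : 0 < sigDelta r x y := by rw [hx0]; exact sig_delta_x_zero r y hy1 hyr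
      have hstep : sigStep r x y = 1 := by
        unfold sigStep; rw [if_neg (by linarith)]
      rw [hstep] at hpt
      rw [if_neg (by norm_num)] at hpt
      rw [hpt]
      refine ⟨by simp; omega, by simp; omega, by simp; omega, by simp; omega, by simp; omega⟩
    · have hx1 : 1 ≤ x := by omega
      by_cases hd : sigDelta r x y ≤ 0
      · -- step left
        have hstep : sigStep r x y = -1 := by unfold sigStep; rw [if_pos hd]
        rw [hstep, if_pos rfl] at hpt
        have hy1 : 1 ≤ y := by
          rcases Nat.eq_zero_or_pos n with h0 | h0
          · exfalso
            have hx' : x = (r:ℤ) := by rw [hx, h0]; rfl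
            have hy' : y = 0 := by rw [hy, h0]; rfl
            rw [hx', hy'] at hd
            exact absurd hd (not_le.mpr (sig_delta_start r hr))
          · exact h5 h0
        rw [hpt]
        refine ⟨by simp; omega, by simp; omega, by simp; omega, by simp; omega, by simp; omega⟩
      · -- step up
        have hstep : sigStep r x y = 1 := by unfold sigStep; rw [if_neg hd]
        rw [hstep, if_neg (by norm_num)] at hpt
        have hyr : y ≤ (r:ℤ) - 1 := by
          by_contra h
          have hyeq : y = (r:ℤ) := by omega
          rw [hyeq] at hd
          exact hd (sig_delta_y_top r x hx1)
        rw [hpt]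
        refine ⟨by simp; omega, by simp; omega, by simp; omega, by simp; omega, by simp; omega⟩

private lemma sig_sum (r : ℕ) :
    ∀ n, ∑ k ∈ Finset.range n, sigS r k = (sigPt r n).1 + (sigPt r n).2 - (r:ℤ) := by
  intro n
  induction n with
  | zero => simp [sigPt]
  | succ n ih =>
    rw [Finset.sum_range_succ, ih]
    have hpt : sigPt r (n+1) =
        if sigStep r (sigPt r n).1 (sigPt r n).2 = -1
        then ((sigPt r n).1 - 1, (sigPt r n).2)
        else ((sigPt r n).1, (sigPt r n).2 + 1) := by
      simp only [sigPt]
    by_cases hd : sigDelta r (sigPt r n).1 (sigPt r n).2 ≤ 0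
    · have hstep : sigStep r (sigPt r n).1 (sigPt r n).2 = -1 := by
        unfold sigStep; rw [if_pos hd]
      rw [hstep, if_pos rfl] at hpt
      rw [hpt]
      simp [sigS, hstep]
      ring
    · have hstep : sigStep r (sigPt r n).1 (sigPt r n).2 = 1 := by
        unfold sigStep; rw [if_neg hd]
      rw [hstep, if_neg (by norm_num)] at hpt
      rw [hpt]
      simp [sigS, hstep]
      ring


/-- For the signum algorithm with integer radius `r ≥ 1`, the quarter-circle path starting
at `(r, 0)` reaches `(0, r)` after exactly `2r` steps: `x_{2r} = 0` and `y_{2r} = r`;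
equivalently `S_{2r-1} = Σ_{k=0}^{2r-1} s_k = 0`. -/
theorem sigPt_two_r (r : ℕ) (hr : 1 ≤ r) :
    sigPt r (2 * r) = (0, (r : ℤ)) ∧ ∑ k ∈ Finset.range (2 * r), sigS r k = 0 := by
  obtain ⟨h1, h2, h3, h4, _⟩ := sig_inv r hr (2 * r) le_rfl
  have hx : (sigPt r (2 * r)).1 = 0 := by omega
  have hy : (sigPt r (2 * r)).2 = (r:ℤ) := by omega
  constructor
  · exact Prod.ext hx hy
  · rw [sig_sum r (2 * r), hx, hy]; ring
end

section
/- Fix an integer r ≥ 1 and let x, y, s be the sequences produced by the signum algorithm for radius r. Then the step sequence is antisymmetric about the midpoint of the quarter circle: s_n = −s_{2r−1−n} for all integers n with 0 ≤ n ≤ 2r−1. -/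
noncomputable def Dd (a b : ℤ) : ℝ := Real.sqrt ((a:ℝ)^2 + (b:ℝ)^2)

lemma Dd_nonneg (a b : ℤ) : 0 ≤ Dd a b := Real.sqrt_nonneg _
lemma Dd_sq (a b : ℤ) : Dd a b ^ 2 = (a:ℝ)^2 + (b:ℝ)^2 := Real.sq_sqrt (by positivity)
lemma Dd_mono {a b c d : ℤ} (h : (a:ℝ)^2 + (b:ℝ)^2 ≤ (c:ℝ)^2 + (d:ℝ)^2) : Dd a b ≤ Dd c d :=
  Real.sqrt_le_sqrt h
lemma Dd_symm (a b : ℤ) : Dd a b = Dd b a := by unfold Dd; rw [add_comm]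

lemma abs_le_abs_iff_sq (u v : ℝ) : |u| ≤ |v| ↔ u^2 ≤ v^2 := by
  rw [← sq_abs u, ← sq_abs v]
  exact (pow_le_pow_iff_left₀ (abs_nonneg u) (abs_nonneg v) (two_ne_zero)).symm

lemma delta_eq (r : ℕ) (x y : ℤ) :
    sigDelta r x y = |(r:ℝ) - Dd (x-1) y| - |(r:ℝ) - Dd x (y+1)| := by
  unfold sigDelta Dd; push_cast; ring_nf

lemma step_cases (r : ℕ) (x y : ℤ) : sigStep r x y = -1 ∨ sigStep r x y = 1 := by
  unfold sigStep; split_ifs <;> simp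

lemma step_neg_iff (r : ℕ) (x y : ℤ) (h : 0 < x + y) :
    sigStep r x y = -1 ↔ 2*(r:ℝ) ≤ Dd (x-1) y + Dd x (y+1) := by
  have ha := Dd_nonneg (x-1) y; have hb := Dd_nonneg x (y+1)
  have ha2 := Dd_sq (x-1) y; have hb2 := Dd_sq x (y+1)
  have hxy : (0:ℝ) < (x:ℝ) + y := by exact_mod_cast h
  have hab : Dd (x-1) y < Dd x (y+1) := by
    apply lt_of_pow_lt_pow_left₀ 2 hb
    rw [ha2, hb2]; push_cast; nlinarith
  have key : sigDelta r x y ≤ 0 ↔ 2*(r:ℝ) ≤ Dd (x-1) y + Dd x (y+1) := by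
    rw [delta_eq, sub_nonpos, abs_le_abs_iff_sq]
    constructor <;> intro h' <;> nlinarith
  constructor
  · intro hs
    refine key.mp ?_
    by_contra hc
    unfold sigStep at hs
    rw [if_neg hc] at hs
    exact absurd hs (by decide)
  · intro hge
    unfold sigStep
    rw [if_pos (key.mpr hge)]

lemma step_one_iff (r : ℕ) (x y : ℤ) (h : 0 < x + y) :
    sigStep r x y = 1 ↔ Dd (x-1) y + Dd x (y+1) < 2*(r:ℝ) := by
  rcases step_cases r x y with h' | h'
  · rw [h']
    simp only [show ¬((-1:ℤ) = 1) by decide, false_iff, not_lt]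
    exact (step_neg_iff r x y h).mp h'
  · rw [h']
    simp only [true_iff]
    by_contra hc
    push_neg at hc
    have := (step_neg_iff r x y h).mpr hc
    rw [h'] at this; exact absurd this (by decide)

lemma diag (r : ℕ) : ∀ n : ℕ, (sigPt r n).1 + (n:ℤ) = (sigPt r n).2 + (r:ℤ) := by
  intro n
  induction n with
  | zero => simp [sigPt]
  | succ n ih =>
    simp only [sigPt]
    split_ifs <;> push_cast <;> push_cast at ih <;> omega

lemma ynn (r : ℕ) : ∀ n : ℕ, 0 ≤ (sigPt r n).2 := by
  intro n
  induction n with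
  | zero => simp [sigPt]
  | succ n ih =>
    simp only [sigPt]
    split_ifs <;> simp <;> omega

lemma inv (r : ℕ) (hr : 1 ≤ r) : ∀ k : ℕ, k < r →
    2*(r:ℝ) ≤ Dd (sigPt r k).1 (sigPt r k).2 + Dd ((sigPt r k).1 + 1) ((sigPt r k).2 + 1) ∧
    (sigStep r (sigPt r k).1 (sigPt r k).2 = -1 →
      Dd ((sigPt r k).1 - 1) ((sigPt r k).2 - 1) + Dd (sigPt r k).1 (sigPt r k).2 < 2*(r:ℝ)) := by
  intro k
  induction k with
  | zero =>
    intro _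
    simp only [sigPt]
    constructor
    · have h1 : Dd (r:ℤ) 0 = (r:ℝ) := by
        unfold Dd; push_cast; simp [Real.sqrt_sq (by positivity : (0:ℝ) ≤ (r:ℝ))]
      have h2 : (r:ℝ) ≤ Dd ((r:ℤ)+1) 1 := by
        unfold Dd
        rw [show (r:ℝ) = Real.sqrt ((r:ℝ)^2) from (Real.sqrt_sq (by positivity)).symm]
        apply Real.sqrt_le_sqrt; push_cast; nlinarith
      norm_num
      linarith
    · intro hs
      have hone : sigStep r (r:ℤ) 0 = 1 := by
        rw [step_one_iff r _ _ (by exact_mod_cast hr)]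
        have e1 : Dd ((r:ℤ)-1) 0 = (r:ℝ)-1 := by
          unfold Dd; push_cast
          rw [show ((r:ℝ)-1)^2 + 0^2 = ((r:ℝ)-1)^2 by ring]
          have h1r : (1:ℝ) ≤ (r:ℝ) := by exact_mod_cast hr
          exact Real.sqrt_sq (by linarith)
        have e2 : Dd (r:ℤ) 1 < (r:ℝ)+1 := by
          unfold Dd; push_cast
          have h1r : (1:ℝ) ≤ (r:ℝ) := by exact_mod_cast hr
          rw [Real.sqrt_lt' (by linarith)]
          nlinarith
        norm_num
        rw [e1]
        linarith
      rw [hs] at hone; exact absurd hone (by decide)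
  | succ k ih =>
    intro hk1
    have hk : k < r := by omega
    obtain ⟨i2, i1⟩ := ih hk
    have hd := diag r k
    have hy := ynn r k
    set x := (sigPt r k).1 with hxdef
    set y := (sigPt r k).2 with hydef
    have hx2 : 2 ≤ x := by omega
    have hx2' : (2:ℝ) ≤ (x:ℝ) := by exact_mod_cast hx2
    have hy0 : (0:ℝ) ≤ (y:ℝ) := by exact_mod_cast hy
    rcases step_cases r x y with h | h
    · -- left step
      have hA : 2*(r:ℝ) ≤ Dd (x-1) y + Dd x (y+1) :=
        (step_neg_iff r x y (by omega)).mp h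
      have hpt : sigPt r (k+1) = (x - 1, y) := by
        simp only [sigPt, ← hxdef, ← hydef, h, if_pos]
      rw [hpt]
      constructor
      · simp only
        rw [show x - 1 + 1 = x by ring]
        exact hA
      · intro _
        have m1 : Dd (x-1-1) (y-1) ≤ Dd (x-1) (y-1) := Dd_mono (by push_cast; nlinarith)
        have m2 : Dd (x-1) y ≤ Dd x y := Dd_mono (by push_cast; nlinarith)
        have := i1 h
        simp only
        linarith
    · -- up step
      have hA : Dd (x-1) y + Dd x (y+1) < 2*(r:ℝ) :=
        (step_one_iff r x y (by omega)).mp h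
      have hpt : sigPt r (k+1) = (x, y + 1) := by
        have h' : ¬ (sigStep r x y = -1) := by rw [h]; decide
        simp only [sigPt, ← hxdef, ← hydef, h', if_neg, ite_false]
      rw [hpt]
      constructor
      · have m1 : Dd x y ≤ Dd x (y+1) := Dd_mono (by push_cast; nlinarith)
        have m2 : Dd (x+1) (y+1) ≤ Dd (x+1) (y+1+1) := Dd_mono (by push_cast; nlinarith)
        simp only
        linarith
      · intro _
        simp only
        rw [show y + 1 - 1 = y by ring]
        exact hA

lemma sqrt2lt2 : Real.sqrt 2 < 2 := by
  rw [Real.sqrt_lt' (by norm_num)]; norm_num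

lemma key (r : ℕ) (hr : 1 ≤ r) (k : ℕ) (hk : k < r) :
    (if sigStep r (sigPt r (k+1)).2 (sigPt r (k+1)).1 = -1
      then ((sigPt r (k+1)).2 - 1, (sigPt r (k+1)).1)
      else ((sigPt r (k+1)).2, (sigPt r (k+1)).1 + 1))
      = ((sigPt r k).2, (sigPt r k).1) := by
  obtain ⟨i2, i1⟩ := inv r hr k hk
  have hd := diag r k
  have hy := ynn r k
  set x := (sigPt r k).1 with hxdef
  set y := (sigPt r k).2 with hydef
  have hx1 : 1 ≤ x := by omega
  rcases step_cases r x y with h | h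
  · -- left step at p_k : p_{k+1} = (x-1, y); show step at (y, x-1) is up
    have hA : 2*(r:ℝ) ≤ Dd (x-1) y + Dd x (y+1) :=
      (step_neg_iff r x y (by omega)).mp h
    have hpt : sigPt r (k+1) = (x - 1, y) := by
      simp only [sigPt, ← hxdef, ← hydef, h, if_pos]
    rw [hpt]
    simp only
    -- rule out (x,y) = (1,0)
    have hxy2 : 2 ≤ x + y := by
      by_contra hc
      have hx : x = 1 := by omega
      have hyy : y = 0 := by omega
      rw [hx, hyy] at hA
      have e0 : Dd (1-1) 0 = 0 := by
        unfold Dd; norm_num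
      have e1 : Dd 1 (0+1) = Real.sqrt 2 := by
        unfold Dd; norm_num
      rw [e0, e1] at hA
      have : (1:ℝ) ≤ (r:ℝ) := by exact_mod_cast hr
      have := sqrt2lt2
      linarith
    have hup : sigStep r y (x-1) = 1 := by
      rw [step_one_iff r y (x-1) (by omega)]
      have := i1 h
      calc Dd (y-1) (x-1) + Dd y (x-1+1)
          = Dd (x-1) (y-1) + Dd x y := by
            rw [Dd_symm, show x - 1 + 1 = x by ring, Dd_symm y x]
        _ < 2*(r:ℝ) := this
    rw [if_neg (by rw [hup]; decide)]
    congr 1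
    ring
  · -- up step at p_k : p_{k+1} = (x, y+1); show step at (y+1, x) is left
    have hpt : sigPt r (k+1) = (x, y + 1) := by
      have h' : ¬ (sigStep r x y = -1) := by rw [h]; decide
      simp only [sigPt, ← hxdef, ← hydef, h', if_neg, ite_false]
    rw [hpt]
    simp only
    have hleft : sigStep r (y+1) x = -1 := by
      rw [step_neg_iff r (y+1) x (by omega)]
      calc 2*(r:ℝ) ≤ Dd x y + Dd (x+1) (y+1) := i2
        _ = Dd (y+1-1) x + Dd (y+1) (x+1) := by
            rw [show y + 1 - 1 = y by ring, Dd_symm y x, Dd_symm (y+1) (x+1)]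
    rw [if_pos hleft]
    congr 1
    ring

lemma main (r : ℕ) (hr : 1 ≤ r) : ∀ j : ℕ, j ≤ r →
    sigPt r (r + j) = ((sigPt r (r - j)).2, (sigPt r (r - j)).1) := by
  intro j
  induction j with
  | zero =>
    intro _
    have hd := diag r r
    rcases hp : sigPt r r with ⟨a, b⟩
    rw [hp] at hd
    simp only [Nat.add_zero, Nat.sub_zero, hp]
    have : a = b := by omega
    rw [this]
  | succ j ih =>
    intro hj
    have hj' : j ≤ r := by omega
    have hk : r - (j+1) < r := by omega
    have hsub : r - j = (r - (j+1)) + 1 := by omega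
    have hidx : r + (j+1) = (r + j) + 1 := by omega
    rw [hidx]
    have step : sigPt r ((r+j)+1) =
        if sigStep r (sigPt r (r+j)).1 (sigPt r (r+j)).2 = -1
        then ((sigPt r (r+j)).1 - 1, (sigPt r (r+j)).2)
        else ((sigPt r (r+j)).1, (sigPt r (r+j)).2 + 1) := rfl
    rw [step, ih hj', hsub]
    simp only
    exact key r hr (r - (j+1)) hk

lemma swap_pt (r : ℕ) (hr : 1 ≤ r) (a b : ℕ) (hab : a + b = 2*r) :
    sigPt r a = ((sigPt r b).2, (sigPt r b).1) := by
  rcases le_or_gt r a with h | h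
  · have := main r hr (a - r) (by omega)
    rw [show r + (a - r) = a by omega, show r - (a - r) = b by omega] at this
    exact this
  · have := main r hr (b - r) (by omega)
    rw [show r + (b - r) = b by omega, show r - (b - r) = a by omega] at this
    rw [this]

/-- The step sequence of the signum algorithm for radius `r ≥ 1` is antisymmetric about
the midpoint of the quarter circle: `s_n = -s_{2r-1-n}` for all `0 ≤ n ≤ 2r - 1`. -/
theorem sigS_antisymm (r : ℕ) (hr : 1 ≤ r) (n : ℕ) (hn : n ≤ 2 * r - 1) :
    sigS r n = -sigS r (2 * r - 1 - n) := by
  set m := 2 * r - 1 - n with hm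
  have h1 : sigPt r m = ((sigPt r (n+1)).2, (sigPt r (n+1)).1) :=
    swap_pt r hr m (n+1) (by omega)
  have h2 : sigPt r (m+1) = ((sigPt r n).2, (sigPt r n).1) :=
    swap_pt r hr (m+1) n (by omega)
  have hrec : sigPt r (m+1) =
      if sigStep r (sigPt r m).1 (sigPt r m).2 = -1
      then ((sigPt r m).1 - 1, (sigPt r m).2)
      else ((sigPt r m).1, (sigPt r m).2 + 1) := rfl
  have hSn : sigS r n = sigStep r (sigPt r n).1 (sigPt r n).2 := rfl
  have hSm : sigS r m = sigStep r (sigPt r m).1 (sigPt r m).2 := rfl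
  rcases step_cases r (sigPt r n).1 (sigPt r n).2 with h | h
  · -- s_n = -1: p_{n+1} = (x-1, y), p_m = (y, x-1)
    have hpt : sigPt r (n+1) = ((sigPt r n).1 - 1, (sigPt r n).2) := by
      simp only [sigPt, h, if_pos]
    rw [hpt] at h1
    rcases step_cases r (sigPt r m).1 (sigPt r m).2 with hm' | hm'
    · exfalso
      rw [hrec, if_pos hm'] at h2
      have := congrArg Prod.fst h2
      simp only [h1] at this
      omega
    · rw [hSn, hSm, h, hm']
  · -- s_n = 1
    have hpt : sigPt r (n+1) = ((sigPt r n).1, (sigPt r n).2 + 1) := by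
      have h' : ¬ (sigStep r (sigPt r n).1 (sigPt r n).2 = -1) := by rw [h]; decide
      simp only [sigPt, h', if_neg, ite_false]
    rw [hpt] at h1
    rcases step_cases r (sigPt r m).1 (sigPt r m).2 with hm' | hm'
    · rw [hSn, hSm, h, hm']; ring
    · exfalso
      have h'' : ¬ (sigStep r (sigPt r m).1 (sigPt r m).2 = -1) := by rw [hm']; decide
      rw [hrec, if_neg h''] at h2
      have := congrArg Prod.fst h2
      simp only [h1] at this
      omega
end

section
/- Let r ≥ 1 be an integer and let s : ℕ → ℤ be any sequence with s_n ∈ {−1, 1} for all n and s₀ = 1. Define x : ℕ → ℤ by x₀ = r and x_{n+1} = x_n − 1 if s_n = −1, x_{n+1} = x_n if s_n = 1; define 𝒜 : ℕ → ℤ by 𝒜₀ = 0 and 𝒜_{n+1} = 𝒜_n + x_n if s_n = 1, 𝒜_{n+1} = 𝒜_n if s_n = −1; and set S_n = Σ_{k=0}^{n} s_k. Then 4·𝒜_{2r−1} = (r+1)(2r−1) + Σ_{k=1}^{2r−2} S_{k−1} + 2r·S_{2r−2} + Σ_{k=1}^{2r−2} s_k·S_{k−1} − Σ_{k=1}^{2r−2}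 k·s_k. -/
private lemma aux_sum_shift (f : ℕ → ℤ) (hf : f 0 = 0) (m : ℕ) :
    ∑ k ∈ Finset.range (m + 1), f k = ∑ k ∈ Finset.Icc 1 m, f k := by
  induction m with
  | zero => simp [hf]
  | succ n ih =>
      rw [Finset.sum_range_succ, ih, Finset.sum_Icc_succ_top (by omega : 1 ≤ n + 1)]

/-- For any ±1 step sequence `s` with `s₀ = 1`, the staircase path `x` starting at
`x₀ = r` and the recursively constructed area `𝒜` (each upward step `s_n = 1` adds a
horizontal strip of width `x_n`) satisfy
`4𝒜_{2r-1} = (r+1)(2r-1) + Σ_{k=1}^{2r-2} S_{k-1} + 2r·S_{2r-2}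
  + Σ_{k=1}^{2r-2} s_k S_{k-1} - Σ_{k=1}^{2r-2} k s_k`,
where `S_n = Σ_{k=0}^n s_k`. -/
theorem area_explicit_form (r : ℕ) (hr : 1 ≤ r)
    (s : ℕ → ℤ) (hs : ∀ n, s n = -1 ∨ s n = 1) (hs0 : s 0 = 1)
    (x : ℕ → ℤ) (hx0 : x 0 = (r : ℤ))
    (hx : ∀ n, x (n + 1) = if s n = -1 then x n - 1 else x n)
    (A : ℕ → ℤ) (hA0 : A 0 = 0)
    (hA : ∀ n, A (n + 1) = if s n = 1 then A n + x n else A n)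
    (S : ℕ → ℤ) (hS : ∀ n, S n = ∑ k ∈ Finset.range (n + 1), s k) :
    4 * A (2 * r - 1) =
      ((r : ℤ) + 1) * (2 * r - 1) + ∑ k ∈ Finset.Icc 1 (2 * r - 2), S (k - 1) +
        2 * r * S (2 * r - 2) + ∑ k ∈ Finset.Icc 1 (2 * r - 2), s k * S (k - 1) -
        ∑ k ∈ Finset.Icc 1 (2 * r - 2), (k : ℤ) * s k := by
  set T : ℕ → ℤ := fun n => ∑ k ∈ Finset.range n, s k with hTdef
  have hTsucc : ∀ n, T (n + 1) = T n + s n := fun n => Finset.sum_range_succ _ _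
  have hT : ∀ n, 2 * x n = 2 * (r : ℤ) - n + T n := by
    intro n
    induction n with
    | zero => simp [hx0, hTdef]
    | succ n ih =>
        rcases hs n with h | h
        · rw [hx n, if_pos h, hTsucc, h]
          push_cast
          linarith
        · rw [hx n, if_neg (by rw [h]; norm_num), hTsucc, h]
          push_cast
          linarith
  have hA4 : ∀ N, 4 * A N =
      ∑ n ∈ Finset.range N, (2 * (r : ℤ) - n + T n) * (1 + s n) := by
    intro N
    induction N with
    | zero => simp [hA0]
    | succ n ih =>
        rw [Finset.sum_range_succ, ← ih, ← hT n, hA n]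
        rcases hs n with h | h
        · rw [if_neg (by rw [h]; norm_num), h]; ring
        · rw [if_pos h, h]; ring
  set m := 2 * r - 2 with hm
  have h1 : 2 * r - 1 = m + 1 := by omega
  have hmz : (m : ℤ) = 2 * (r : ℤ) - 2 := by omega
  -- rewrite S in terms of T
  have e1 : ∀ k ∈ Finset.Icc 1 m, S (k - 1) = T k := by
    intro k hk
    have hk1 : 1 ≤ k := (Finset.mem_Icc.mp hk).1
    have : k - 1 + 1 = k := by omega
    rw [hS, this, hTdef]
  have e2 : S m = T (m + 1) := by rw [hS, hTdef]
  rw [h1, hA4, e2,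
    Finset.sum_congr rfl e1,
    Finset.sum_congr rfl (fun k hk => by rw [e1 k hk] : ∀ k ∈ Finset.Icc 1 m,
      s k * S (k - 1) = s k * T k)]
  -- expand and split the sum
  have split : ∑ n ∈ Finset.range (m + 1), (2 * (r : ℤ) - n + T n) * (1 + s n)
      = (∑ n ∈ Finset.range (m + 1), (2 * (r : ℤ) - n))
        + (2 * (r : ℤ) * (∑ n ∈ Finset.range (m + 1), s n)
            - ∑ n ∈ Finset.range (m + 1), (n : ℤ) * s n)
        + ((∑ n ∈ Finset.range (m + 1), T n)
            + ∑ n ∈ Finset.range (m + 1), s n * T n) := by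
    rw [Finset.mul_sum, ← Finset.sum_sub_distrib, ← Finset.sum_add_distrib,
      ← Finset.sum_add_distrib, ← Finset.sum_add_distrib]
    exact Finset.sum_congr rfl fun n _ => by ring
  have c1 : ∑ n ∈ Finset.range (m + 1), (n : ℤ) * s n
      = ∑ k ∈ Finset.Icc 1 m, (k : ℤ) * s k :=
    aux_sum_shift _ (by simp) m
  have c2 : ∑ n ∈ Finset.range (m + 1), T n = ∑ k ∈ Finset.Icc 1 m, T k :=
    aux_sum_shift _ (by simp [hTdef]) m
  have c3 : ∑ n ∈ Finset.range (m + 1), s n * T n = ∑ k ∈ Finset.Icc 1 m, s k * T k :=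
    aux_sum_shift _ (by simp [hTdef]) m
  rw [split, c1, c2, c3]
  -- Gauss sum
  have g2 : (∑ n ∈ Finset.range (m + 1), (n : ℤ)) * 2 = ((m : ℤ) + 1) * m := by
    have h := Finset.sum_range_id_mul_two (m + 1)
    rw [Nat.add_sub_cancel] at h
    push_cast at h
    linarith [h]
  have gauss : ∑ n ∈ Finset.range (m + 1), (2 * (r : ℤ) - n)
      = ((r : ℤ) + 1) * (2 * r - 1) := by
    rw [Finset.sum_sub_distrib, Finset.sum_const, Finset.card_range, nsmul_eq_mul]
    have hA' : (∑ n ∈ Finset.range (m + 1), (n : ℤ)) = (2 * (r : ℤ) - 1) * (r - 1) := by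
      have h2 : (∑ n ∈ Finset.range (m + 1), (n : ℤ)) * 2
          = 2 * ((2 * (r : ℤ) - 1) * (r - 1)) := by
        rw [g2, hmz]; ring
      linarith
    rw [hA']
    push_cast
    rw [hmz]
    ring
  rw [gauss]
  have hTsum : ∑ n ∈ Finset.range (m + 1), s n = T (m + 1) := rfl
  rw [hTsum]
  ring
end

section
/- Let r ≥ 1 be an integer and let s : ℕ → ℤ be any sequence with s_n ∈ {−1, 1} for all n, satisfying the antisymmetry property s_n = −s_{2r−1−n} for all 0 ≤ n ≤ 2r−1. Set S_n = Σ_{k=0}^{n} s_k. Then Σ_{k=1}^{2r−2} s_k·S_{k−1} = −(r − 1). -/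
/-- For any ±1 step sequence `s` with the antisymmetry property `s_n = -s_{2r-1-n}` for
`0 ≤ n ≤ 2r-1`, the partial sums `S_n = Σ_{k=0}^n s_k` satisfy
`Σ_{k=1}^{2r-2} s_k S_{k-1} = -(r-1)`. -/
theorem antisymm_weighted_sum (r : ℕ) (hr : 1 ≤ r)
    (s : ℕ → ℤ) (hs : ∀ n, s n = -1 ∨ s n = 1)
    (hanti : ∀ n : ℕ, n ≤ 2 * r - 1 → s n = -s (2 * r - 1 - n))
    (S : ℕ → ℤ) (hS : ∀ n, S n = ∑ k ∈ Finset.range (n + 1), s k) :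
    ∑ k ∈ Finset.Icc 1 (2 * r - 2), s k * S (k - 1) = -((r : ℤ) - 1) := by
  have hsq : ∀ n, s n ^ 2 = 1 := by
    intro n; rcases hs n with h | h <;> rw [h] <;> ring
  have hstep : ∀ k, S (k + 1) = S k + s (k + 1) := by
    intro k; rw [hS, hS, Finset.sum_range_succ]
  -- S (2r-1) = 0
  have hzero : S (2 * r - 1) = 0 := by
    have h1 : S (2 * r - 1) = ∑ k ∈ Finset.range (2 * r), s k := by
      have he : 2 * r - 1 + 1 = 2 * r := by omega
      rw [hS, he]
    have h2 : ∑ k ∈ Finset.range (2 * r), s (2 * r - 1 - k)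
        = ∑ k ∈ Finset.range (2 * r), s k := Finset.sum_range_reflect s (2 * r)
    have h3 : ∑ k ∈ Finset.range (2 * r), s (2 * r - 1 - k)
        = -∑ k ∈ Finset.range (2 * r), s k := by
      rw [← Finset.sum_neg_distrib]
      refine Finset.sum_congr rfl fun k hk => ?_
      have hk' : k ≤ 2 * r - 1 := by
        have := Finset.mem_range.mp hk; omega
      have := hanti k hk'
      omega
    rw [h1]
    linarith [h2, h3]
  have hS0 : S 0 ^ 2 = 1 := by
    rw [hS]; simpa using hsq 0
  have hSend : S (2 * r - 2) ^ 2 = 1 := by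
    have h1 : 2 * r - 1 = (2 * r - 2) + 1 := by omega
    have h2 := hstep (2 * r - 2)
    rw [← h1, hzero] at h2
    have : S (2 * r - 2) = -s (2 * r - 1) := by linarith
    rw [this]; rw [neg_pow]; simp [hsq]
  -- telescoping
  set f : ℕ → ℤ := fun k => S k ^ 2 - k with hf
  have htel : ∑ k ∈ Finset.range (2 * r - 2), (f (k + 1) - f k)
      = f (2 * r - 2) - f 0 := Finset.sum_range_sub f (2 * r - 2)
  have heach : ∀ k, f (k + 1) - f k = 2 * (s (k + 1) * S k) := by
    intro k
    have h1 := hstep k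
    have h2 := hsq (k + 1)
    simp only [hf]
    rw [h1]
    push_cast
    linear_combination h2
  have hsum2 : 2 * ∑ k ∈ Finset.range (2 * r - 2), s (k + 1) * S k
      = f (2 * r - 2) - f 0 := by
    rw [← htel, Finset.mul_sum]
    exact Finset.sum_congr rfl fun k _ => (heach k).symm
  -- convert Icc sum to range sum
  have hconv : ∑ k ∈ Finset.Icc 1 (2 * r - 2), s k * S (k - 1)
      = ∑ k ∈ Finset.range (2 * r - 2), s (k + 1) * S k := by
    have he : Finset.Icc 1 (2 * r - 2) = Finset.Ico 1 (2 * r - 1) := by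
      rw [show 2 * r - 1 = (2 * r - 2) + 1 by omega, Finset.Ico_add_one_right_eq_Icc]
    rw [he, Finset.sum_Ico_eq_sum_range]
    refine Finset.sum_congr (by congr 1) fun k _ => ?_
    congr 1
    · congr 1; omega
    · congr 1; omega
  rw [hconv]
  have hcast : ((2 * r - 2 : ℕ) : ℤ) = 2 * (r : ℤ) - 2 := by
    have : (1 : ℕ) ≤ r := hr; push_cast [Nat.cast_sub (by omega : 2 ≤ 2 * r)]; ring
  simp only [hf] at hsum2
  rw [hS0] at *
  have h0 : ((0 : ℕ) : ℤ) = 0 := rfl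
  linarith [hsum2, hSend, hcast]
end

section
/- Let r ≥ 1 be an integer and let s : ℕ → ℤ be any sequence with s_n ∈ {−1, 1} for all n, s₀ = 1, and the antisymmetry property s_n = −s_{2r−1−n} for all 0 ≤ n ≤ 2r−1. Define x : ℕ → ℤ by x₀ = r and x_{n+1} = x_n − 1 if s_n = −1, x_{n+1} = x_n if s_n = 1; define 𝒜 : ℕ → ℤ by 𝒜₀ = 0 and 𝒜_{n+1} = 𝒜_n + x_n if s_n = 1, 𝒜_{n+1} = 𝒜_n if s_n = −1; and set S_n = Σ_{k=0}^{n} s_k. Then Σ_{k=1}^{2r−2} S_{k−1} = 2·𝒜_{2r−1} − r² − 1. -/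
/-- For any ±1 step sequence `s` with `s₀ = 1` and the antisymmetry property
`s_n = -s_{2r-1-n}` for `0 ≤ n ≤ 2r-1`, the staircase path `x` starting at `x₀ = r`,
the recursively constructed area `𝒜` and the partial sums `S_n = Σ_{k=0}^n s_k` satisfy
`Σ_{k=1}^{2r-2} S_{k-1} = 2𝒜_{2r-1} - r² - 1`. -/
theorem partial_sum_area_identity (r : ℕ) (hr : 1 ≤ r)
    (s : ℕ → ℤ) (hs : ∀ n, s n = -1 ∨ s n = 1) (hs0 : s 0 = 1)
    (hanti : ∀ n : ℕ, n ≤ 2 * r - 1 → s n = -s (2 * r - 1 - n))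
    (x : ℕ → ℤ) (hx0 : x 0 = (r : ℤ))
    (hx : ∀ n, x (n + 1) = if s n = -1 then x n - 1 else x n)
    (A : ℕ → ℤ) (hA0 : A 0 = 0)
    (hA : ∀ n, A (n + 1) = if s n = 1 then A n + x n else A n)
    (S : ℕ → ℤ) (hS : ∀ n, S n = ∑ k ∈ Finset.range (n + 1), s k) :
    ∑ k ∈ Finset.Icc 1 (2 * r - 2), S (k - 1) = 2 * A (2 * r - 1) - (r : ℤ) ^ 2 - 1 := by
  -- the staircase height formula
  have hxf : ∀ n : ℕ, 2 * x n = 2 * (r : ℤ) - n + ∑ k ∈ Finset.range n, s k := by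
    intro n
    induction n with
    | zero => simp [hx0]
    | succ n ih =>
      rcases hs n with h | h
      · rw [hx n, if_pos h, Finset.sum_range_succ, h]
        push_cast
        push_cast at ih
        linarith
      · rw [hx n, if_neg (by rw [h]; norm_num), Finset.sum_range_succ, h]
        push_cast
        push_cast at ih
        linarith
  -- the key polynomial identity for the area
  have key : ∀ n : ℕ, 8 * A n =
      4 * (∑ k ∈ Finset.range n, ∑ j ∈ Finset.range k, s j)
      + 2 * (∑ k ∈ Finset.range n, s k) * (2 * (r : ℤ) - n + 1)
      + 4 * r * n - n * ((n : ℤ) - 1)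
      + (∑ k ∈ Finset.range n, s k) ^ 2 - n := by
    intro n
    induction n with
    | zero => simp [hA0]
    | succ n ih =>
      rcases hs n with h | h
      · rw [hA n, if_neg (by rw [h]; norm_num)]
        simp only [Finset.sum_range_succ, h]
        push_cast
        push_cast at ih
        linear_combination ih
      · rw [hA n, if_pos h]
        simp only [Finset.sum_range_succ, h]
        push_cast
        push_cast at ih
        linear_combination ih + 4 * hxf n
  -- the full sum of s over 0..2r-1 vanishes by antisymmetry
  have hsum0 : ∑ k ∈ Finset.range (2 * r), s k = 0 := by
    apply Finset.sum_involution (g := fun a _ => 2 * r - 1 - a)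
    · intro a ha
      have ha' : a ≤ 2 * r - 1 := by
        have := Finset.mem_range.mp ha; omega
      have := hanti a ha'
      linarith
    · intro a ha hfa
      have ha' : a < 2 * r := Finset.mem_range.mp ha
      intro heq
      have h2 : 2 * r - 1 - a = a := heq
      have : 2 * a = 2 * r - 1 := by omega
      omega
    · intro a ha
      have := Finset.mem_range.mp ha
      exact Finset.mem_range.mpr (by omega)
    · intro a ha
      have := Finset.mem_range.mp ha
      omega
  -- hence the sum over 0..2r-2 equals 1
  have hsN : s (2 * r - 1) = -1 := by
    have := hanti (2 * r - 1) le_rfl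
    rw [Nat.sub_self] at this
    rw [this, hs0]
  have hT : ∑ k ∈ Finset.range (2 * r - 1), s k = 1 := by
    have h2r : 2 * r = (2 * r - 1) + 1 := by omega
    rw [h2r, Finset.sum_range_succ, hsN] at hsum0
    linarith
  -- rewrite the goal sum
  have hLHS : ∑ k ∈ Finset.Icc 1 (2 * r - 2), S (k - 1)
      = ∑ k ∈ Finset.range (2 * r - 1), ∑ j ∈ Finset.range k, s j := by
    have h1 : ∑ k ∈ Finset.Icc 1 (2 * r - 2), S (k - 1)
        = ∑ k ∈ Finset.Icc 1 (2 * r - 2), ∑ j ∈ Finset.range k, s j := by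
      apply Finset.sum_congr rfl
      intro k hk
      have hk1 : 1 ≤ k := (Finset.mem_Icc.mp hk).1
      rw [hS (k - 1)]
      have hk2 : k - 1 + 1 = k := by omega
      rw [hk2]
    rw [h1]
    have h2 : Finset.Icc 1 (2 * r - 2) = Finset.Ico 1 (2 * r - 1) := by
      have : 2 * r - 1 = (2 * r - 2) + 1 := by omega
      rw [this, Finset.Ico_add_one_right_eq_Icc]
    rw [h2]
    have h3 := Finset.sum_Ico_consecutive (fun k => ∑ j ∈ Finset.range k, s j)
        (Nat.zero_le 1) (by omega : 1 ≤ 2 * r - 1)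
    simp only [← Finset.range_eq_Ico] at h3
    rw [Finset.sum_range_one] at h3
    simpa using h3
  -- put everything together
  have hkey := key (2 * r - 1)
  rw [hT] at hkey
  have hcast : ((2 * r - 1 : ℕ) : ℤ) = 2 * (r : ℤ) - 1 := by
    have : 1 ≤ 2 * r := by omega
    push_cast [this]
    ring
  rw [hcast] at hkey
  rw [hLHS]
  nlinarith [hkey, sq_nonneg ((r : ℤ) - 1)]
end

section
/- Let r ≥ 1 be an integer and let s : ℕ → ℤ be any sequence with s_n ∈ {−1, 1} for all n, s₀ = 1, and the antisymmetry property s_n = −s_{2r−1−n} for all 0 ≤ n ≤ 2r−1. Define x, y : ℕ → ℤ by x₀ = r, y₀ = 0 and x_{n+1} = x_n − 1, y_{n+1} = y_n if s_n = −1, x_{n+1} = x_n, y_{n+1} = y_n + 1 if s_n = 1; define 𝒜 : ℕ → ℤ by 𝒜₀ = 0 and 𝒜_{n+1} = 𝒜_n + x_n if s_n = 1, 𝒜_{n+1} = 𝒜_n if s_n = −1. Then the Manhattan distances a_n = x_n + y_n satisfy Σ_{n=0}^{2r−1} a_n = r² + 2·𝒜_{2r−1}. -/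
/-- For any ±1 step sequence `s` with `s₀ = 1` and the antisymmetry property
`s_n = -s_{2r-1-n}` for `0 ≤ n ≤ 2r-1`, the Manhattan distances `a_n = x_n + y_n` of the
points of the staircase path starting at `(r, 0)` and the recursively constructed area
`𝒜` satisfy `Σ_{n=0}^{2r-1} a_n = r² + 2𝒜_{2r-1}`. -/
theorem manhattan_sum_area_identity (r : ℕ) (hr : 1 ≤ r)
    (s : ℕ → ℤ) (hs : ∀ n, s n = -1 ∨ s n = 1) (hs0 : s 0 = 1)
    (hanti : ∀ n : ℕ, n ≤ 2 * r - 1 → s n = -s (2 * r - 1 - n))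
    (x y : ℕ → ℤ) (hx0 : x 0 = (r : ℤ)) (hy0 : y 0 = 0)
    (hxy : ∀ n, (x (n + 1), y (n + 1)) =
      if s n = -1 then (x n - 1, y n) else (x n, y n + 1))
    (A : ℕ → ℤ) (hA0 : A 0 = 0)
    (hA : ∀ n, A (n + 1) = if s n = 1 then A n + x n else A n) :
    ∑ n ∈ Finset.range (2 * r), (x n + y n) = (r : ℤ) ^ 2 + 2 * A (2 * r - 1) := by
  have hxsm : ∀ n, s n = -1 → x (n + 1) = x n - 1 ∧ y (n + 1) = y n := by
    intro n h
    have h2 := hxy n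
    rw [if_pos h] at h2
    exact ⟨congrArg Prod.fst h2, congrArg Prod.snd h2⟩
  have hxsp : ∀ n, s n = 1 → x (n + 1) = x n ∧ y (n + 1) = y n + 1 := by
    intro n h
    have h2 := hxy n
    rw [if_neg (by omega)] at h2
    exact ⟨congrArg Prod.fst h2, congrArg Prod.snd h2⟩
  -- key invariant
  have key : ∀ m, 2 * ∑ n ∈ Finset.range m, (x n + y n)
      = 4 * A m - 2 * x m * y m + (y m) ^ 2 - y m - (x m) ^ 2 - x m
        + (r : ℤ) ^ 2 + (r : ℤ) := by
    intro m
    induction m with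
    | zero => simp [hA0, hx0, hy0]; ring
    | succ m ih =>
      rw [Finset.sum_range_succ, hA m]
      rcases hs m with h | h
      · obtain ⟨hx', hy'⟩ := hxsm m h
        rw [if_neg (by omega), hx', hy']
        linear_combination ih
      · obtain ⟨hx', hy'⟩ := hxsp m h
        rw [if_pos h, hx', hy']
        linear_combination ih
  -- total step sum is zero
  have hT : ∑ k ∈ Finset.range (2 * r), s k = 0 := by
    have h1 : ∑ k ∈ Finset.range (2 * r), s (2 * r - 1 - k)
        = ∑ k ∈ Finset.range (2 * r), s k := Finset.sum_range_reflect s (2 * r)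
    have h2 : ∑ k ∈ Finset.range (2 * r), s (2 * r - 1 - k)
        = ∑ k ∈ Finset.range (2 * r), (-(s k)) := by
      refine Finset.sum_congr rfl ?_
      intro k hk
      rw [Finset.mem_range] at hk
      have := hanti k (by omega)
      omega
    rw [h2, Finset.sum_neg_distrib] at h1
    omega
  -- coordinates in terms of partial sums
  have hy2 : ∀ n, 2 * y n = (n : ℤ) + ∑ k ∈ Finset.range n, s k := by
    intro n
    induction n with
    | zero => simp [hy0]
    | succ n ih =>
      rw [Finset.sum_range_succ]
      rcases hs n with h | h
      · rw [(hxsm n h).2]; push_cast; omega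
      · rw [(hxsp n h).2]; push_cast; omega
  have hx2 : ∀ n, 2 * x n + (n : ℤ) = 2 * (r : ℤ) + ∑ k ∈ Finset.range n, s k := by
    intro n
    induction n with
    | zero => simp [hx0]
    | succ n ih =>
      rw [Finset.sum_range_succ]
      rcases hs n with h | h
      · rw [(hxsm n h).1]; push_cast; push_cast at ih; omega
      · rw [(hxsp n h).1]; push_cast; push_cast at ih; omega
  have hxend : x (2 * r) = 0 := by
    have := hx2 (2 * r); rw [hT] at this; push_cast at this; omega
  have hyend : y (2 * r) = (r : ℤ) := by
    have := hy2 (2 * r); rw [hT] at this; push_cast at this; omega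
  -- last step is -1, so A (2r) = A (2r-1)
  have hslast : s (2 * r - 1) = -1 := by
    have h := hanti (2 * r - 1) le_rfl
    rw [Nat.sub_self, hs0] at h
    omega
  have hAeq : A (2 * r) = A (2 * r - 1) := by
    have h2r : 2 * r = (2 * r - 1) + 1 := by omega
    rw [h2r, hA, if_neg (by omega)]; simp
  have hkey := key (2 * r)
  rw [hxend, hyend, hAeq] at hkey
  linarith
end

section
/- Fix an integer r ≥ 1 and let x, y, s be the sequences produced by the signum algorithm for radius r, and define 𝒜 : ℕ → ℤ by 𝒜₀ = 0 and 𝒜_{n+1} = 𝒜_n + x_n if s_n = 1, 𝒜_{n+1} = 𝒜_n if s_n = −1. Then the area enclosed by the digital quarter circle satisfies lim_{r→∞} 𝒜_{2r−1} / r² = π/4, the limit being taken over positive integers r tending to infinity. -/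
open Filter

namespace SigAux

lemma pt_succ (r n : ℕ) : sigPt r (n+1) =
    if sigS r n = -1 then ((sigPt r n).1 - 1, (sigPt r n).2)
    else ((sigPt r n).1, (sigPt r n).2 + 1) := rfl

lemma s_eq_neg_one_iff (r n : ℕ) :
    sigS r n = -1 ↔ sigDelta r (sigPt r n).1 (sigPt r n).2 ≤ 0 := by
  unfold sigS sigStep; split_ifs <;> simp_all

lemma x_add (r n : ℕ) : (sigPt r n).1 + n = r + (sigPt r n).2 := by
  induction n with
  | zero => simp [sigPt]
  | succ n ih =>
    rw [pt_succ]
    split_ifs <;> simp only [] <;> push_cast <;> omega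

lemma y_nonneg (r n : ℕ) : 0 ≤ (sigPt r n).2 := by
  induction n with
  | zero => simp [sigPt]
  | succ n ih => rw [pt_succ]; split_ifs <;> simp <;> omega

def Inv (r : ℕ) (n : ℕ) : Prop :=
  ((r:ℤ)-1)^2 ≤ (sigPt r n).1^2 + (sigPt r n).2^2 ∧
    (sigPt r n).1^2 + (sigPt r n).2^2 ≤ ((r:ℤ)+1)^2

lemma x_pos {r n : ℕ} (hn : (n:ℤ) ≤ 2*(r:ℤ) - 2) (hinv : Inv r n) :
    1 ≤ (sigPt r n).1 := by
  set x := (sigPt r n).1; set y := (sigPt r n).2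
  have hx := x_add r n
  have hy := y_nonneg r n
  by_contra h
  push_neg at h
  have h0 : x ≤ 0 := by omega
  have h1 : ((r:ℤ)-1)^2 ≤ (y - x)^2 := by nlinarith [hinv.1]
  have h2 : (r:ℤ) - 1 ≤ y - x := by nlinarith
  omega

lemma step_left' (r ρ ρL ρU : ℝ)
    (hρlb : r - 1 ≤ ρ) (hρub : ρ ≤ r + 1)
    (hL1 : ρ - 1 ≤ ρL) (hL2 : ρL ≤ ρ)
    (hU1 : ρ ≤ ρU) (hU2 : ρU ≤ ρ + 1)
    (hΔ : |r - ρL| ≤ |r - ρU|) :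
    r - 1 ≤ ρL ∧ ρL ≤ r + 1 := by
  rcases le_or_gt ρ r with h | h
  · have hU : |r - ρU| ≤ 1 := by rw [abs_le]; constructor <;> linarith
    have := abs_le.mp (hΔ.trans hU)
    constructor <;> linarith [this.1, this.2]
  · constructor <;> linarith

lemma step_up' (r ρ ρL ρU : ℝ)
    (hρlb : r - 1 ≤ ρ) (hρub : ρ ≤ r + 1)
    (hL1 : ρ - 1 ≤ ρL) (hL2 : ρL ≤ ρ)
    (hU1 : ρ ≤ ρU) (hU2 : ρU ≤ ρ + 1)
    (hΔ : |r - ρU| ≤ |r - ρL|) :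
    r - 1 ≤ ρU ∧ ρU ≤ r + 1 := by
  rcases le_or_gt ρ r with h | h
  · constructor <;> linarith
  · have hL : |r - ρL| ≤ 1 := by rw [abs_le]; constructor <;> linarith
    have := abs_le.mp (hΔ.trans hL)
    constructor <;> linarith [this.1, this.2]

lemma key (r X Y : ℝ) (hr1 : 1 ≤ r) (hX1 : 1 ≤ X) (hY0 : 0 ≤ Y)
    (hblb : (r-1)^2 ≤ X^2+Y^2) (hbub : X^2+Y^2 ≤ (r+1)^2) :
    (|r - Real.sqrt ((X-1)^2+Y^2)| ≤ |r - Real.sqrt (X^2+(Y+1)^2)| →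
      (r-1)^2 ≤ (X-1)^2+Y^2 ∧ (X-1)^2+Y^2 ≤ (r+1)^2) ∧
    (|r - Real.sqrt (X^2+(Y+1)^2)| ≤ |r - Real.sqrt ((X-1)^2+Y^2)| →
      (r-1)^2 ≤ X^2+(Y+1)^2 ∧ X^2+(Y+1)^2 ≤ (r+1)^2) := by
  have hb0 : (0:ℝ) ≤ X^2+Y^2 := by positivity
  have ha0 : (0:ℝ) ≤ (X-1)^2+Y^2 := by positivity
  have hc0 : (0:ℝ) ≤ X^2+(Y+1)^2 := by positivity
  set ρ := Real.sqrt (X^2+Y^2) with hρ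
  set ρL := Real.sqrt ((X-1)^2+Y^2) with hρL
  set ρU := Real.sqrt (X^2+(Y+1)^2) with hρU
  have hρsq : ρ^2 = X^2+Y^2 := Real.sq_sqrt hb0
  have hρLsq : ρL^2 = (X-1)^2+Y^2 := Real.sq_sqrt ha0
  have hρUsq : ρU^2 = X^2+(Y+1)^2 := Real.sq_sqrt hc0
  have hρ0 : 0 ≤ ρ := Real.sqrt_nonneg _
  have hρL0 : 0 ≤ ρL := Real.sqrt_nonneg _
  have hρU0 : 0 ≤ ρU := Real.sqrt_nonneg _
  have hρlb : r - 1 ≤ ρ := (Real.le_sqrt (by linarith) hb0).mpr hblb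
  have hρub : ρ ≤ r + 1 := by
    calc ρ ≤ Real.sqrt ((r+1)^2) := Real.sqrt_le_sqrt hbub
      _ = r+1 := Real.sqrt_sq (by linarith)
  have hXL : X - 1 ≤ ρL := (Real.le_sqrt (by linarith) ha0).mpr (by nlinarith [sq_nonneg Y])
  have hL2 : ρL ≤ ρ := Real.sqrt_le_sqrt (by nlinarith)
  have hL1 : ρ - 1 ≤ ρL := by
    have hble : X^2+Y^2 ≤ (ρL + 1)^2 := by nlinarith
    have h2 : ρ ≤ ρL + 1 := by
      calc ρ ≤ Real.sqrt ((ρL+1)^2) := Real.sqrt_le_sqrt hble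
        _ = ρL + 1 := Real.sqrt_sq (by linarith)
    linarith
  have hYρ : Y ≤ ρ := (Real.le_sqrt hY0 hb0).mpr (by nlinarith [sq_nonneg X])
  have hU1 : ρ ≤ ρU := Real.sqrt_le_sqrt (by nlinarith)
  have hU2 : ρU ≤ ρ + 1 := by
    have hcle : X^2+(Y+1)^2 ≤ (ρ + 1)^2 := by nlinarith
    calc ρU ≤ Real.sqrt ((ρ+1)^2) := Real.sqrt_le_sqrt hcle
      _ = ρ + 1 := Real.sqrt_sq (by linarith)
  constructor
  · intro habs
    have hstep := step_left' r ρ ρL ρU hρlb hρub hL1 hL2 hU1 hU2 habs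
    have e1 := pow_le_pow_left₀ (by linarith : (0:ℝ) ≤ r - 1) hstep.1 2
    have e2 := pow_le_pow_left₀ hρL0 hstep.2 2
    rw [hρLsq] at e1 e2
    exact ⟨e1, e2⟩
  · intro habs
    have hstep := step_up' r ρ ρL ρU hρlb hρub hL1 hL2 hU1 hU2 habs
    have e1 := pow_le_pow_left₀ (by linarith : (0:ℝ) ≤ r - 1) hstep.1 2
    have e2 := pow_le_pow_left₀ hρU0 hstep.2 2
    rw [hρUsq] at e1 e2
    exact ⟨e1, e2⟩

lemma inv {r : ℕ} (hr : 1 ≤ r) : ∀ n : ℕ, (n:ℤ) ≤ 2*(r:ℤ) - 1 → Inv r n := by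
  intro n
  induction n with
  | zero =>
    intro _
    constructor <;> simp [sigPt] <;> nlinarith [sq_nonneg ((r:ℤ))]
  | succ n ih =>
    intro hn
    have hinv := ih (by push_cast at hn ⊢; omega)
    have hx1 : 1 ≤ (sigPt r n).1 := x_pos (by push_cast at hn ⊢; omega) hinv
    have hy0 := y_nonneg r n
    set x := (sigPt r n).1 with hxdef
    set y := (sigPt r n).2 with hydef
    have hk := key (r:ℝ) (x:ℝ) (y:ℝ) (by exact_mod_cast hr) (by exact_mod_cast hx1)
      (by exact_mod_cast hy0) (by exact_mod_cast hinv.1) (by exact_mod_cast hinv.2)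
    rcases le_or_gt (sigDelta r x y) 0 with hΔ | hΔ
    · have hs : sigS r n = -1 := (s_eq_neg_one_iff r n).mpr hΔ
      have hpt : sigPt r (n+1) = (x - 1, y) := by rw [pt_succ, if_pos hs]
      have habs : |(r:ℝ) - Real.sqrt (((x:ℝ)-1)^2+(y:ℝ)^2)| ≤
          |(r:ℝ) - Real.sqrt ((x:ℝ)^2+((y:ℝ)+1)^2)| := by
        rw [sigDelta] at hΔ; linarith
      have h12 := hk.1 habs
      unfold Inv
      rw [hpt]
      dsimp only
      exact ⟨by exact_mod_cast h12.1, by exact_mod_cast h12.2⟩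
    · have hs : ¬ sigS r n = -1 := by
        rw [s_eq_neg_one_iff r n]; exact not_le.mpr hΔ
      have hpt : sigPt r (n+1) = (x, y + 1) := by rw [pt_succ, if_neg hs]
      have habs : |(r:ℝ) - Real.sqrt ((x:ℝ)^2+((y:ℝ)+1)^2)| ≤
          |(r:ℝ) - Real.sqrt (((x:ℝ)-1)^2+(y:ℝ)^2)| := by
        rw [sigDelta] at hΔ; linarith
      have h12 := hk.2 habs
      unfold Inv
      rw [hpt]
      dsimp only
      exact ⟨by exact_mod_cast h12.1, by exact_mod_cast h12.2⟩

lemma s_cases (r n : ℕ) : sigS r n = -1 ∨ sigS r n = 1 := by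
  unfold sigS sigStep; split_ifs <;> simp

lemma area_succ (r n : ℕ) : sigArea r (n+1) =
    if sigS r n = 1 then sigArea r n + (sigPt r n).1 else sigArea r n := rfl

lemma area_bounds {r : ℕ} (hr : 1 ≤ r) : ∀ n : ℕ, (n:ℤ) ≤ 2*(r:ℤ) - 1 →
    (∑ v ∈ Finset.range (sigPt r n).2.toNat, Real.sqrt (((r:ℝ)-1)^2 - (v:ℝ)^2))
      ≤ (sigArea r n : ℝ) ∧
    (sigArea r n : ℝ) ≤
      ∑ v ∈ Finset.range (sigPt r n).2.toNat, Real.sqrt (((r:ℝ)+1)^2 - (v:ℝ)^2) := by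
  intro n
  induction n with
  | zero => intro _; simp [sigPt, sigArea]
  | succ n ih =>
    intro hn
    have hn' : (n:ℤ) ≤ 2*(r:ℤ)-1 := by push_cast at hn ⊢; omega
    have ihh := ih hn'
    have hinv := inv hr n hn'
    have hx1 : 1 ≤ (sigPt r n).1 := x_pos (by push_cast at hn ⊢; omega) hinv
    have hy0 := y_nonneg r n
    set x := (sigPt r n).1 with hxdef
    set y := (sigPt r n).2 with hydef
    rcases s_cases r n with hs | hs
    · have hpt : sigPt r (n+1) = (x - 1, y) := by rw [pt_succ, if_pos hs]
      have hA : sigArea r (n+1) = sigArea r n := by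
        rw [area_succ, if_neg (by rw [hs]; decide)]
      rw [hpt, hA]
      exact ihh
    · have hpt : sigPt r (n+1) = (x, y + 1) := by
        rw [pt_succ, if_neg (by rw [hs]; decide)]
      have hA : sigArea r (n+1) = sigArea r n + x := by
        rw [area_succ, if_pos hs]
      have htn : (y + 1).toNat = y.toNat + 1 := by omega
      have hyc : ((y.toNat : ℕ) : ℝ) = (y : ℝ) := by
        exact_mod_cast Int.toNat_of_nonneg hy0
      have hxr0 : (0:ℝ) ≤ (x:ℝ) := by exact_mod_cast (by omega : (0:ℤ) ≤ x)
      have hlow : Real.sqrt (((r:ℝ)-1)^2 - (y:ℝ)^2) ≤ (x:ℝ) := by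
        have h1 : ((r:ℝ)-1)^2 - (y:ℝ)^2 ≤ (x:ℝ)^2 := by
          have := hinv.1
          have h' : ((r:ℝ)-1)^2 ≤ (x:ℝ)^2 + (y:ℝ)^2 := by exact_mod_cast this
          linarith
        calc Real.sqrt (((r:ℝ)-1)^2 - (y:ℝ)^2) ≤ Real.sqrt ((x:ℝ)^2) :=
              Real.sqrt_le_sqrt h1
          _ = (x:ℝ) := Real.sqrt_sq hxr0
      have hhigh : (x:ℝ) ≤ Real.sqrt (((r:ℝ)+1)^2 - (y:ℝ)^2) := by
        have h1 : (x:ℝ)^2 ≤ ((r:ℝ)+1)^2 - (y:ℝ)^2 := by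
          have := hinv.2
          have h' : (x:ℝ)^2 + (y:ℝ)^2 ≤ ((r:ℝ)+1)^2 := by exact_mod_cast this
          linarith
        calc (x:ℝ) = Real.sqrt ((x:ℝ)^2) := (Real.sqrt_sq hxr0).symm
          _ ≤ _ := Real.sqrt_le_sqrt h1
      rw [hpt, hA]
      dsimp only
      rw [htn, Finset.sum_range_succ, Finset.sum_range_succ, hyc]
      push_cast
      constructor
      · have := ihh.1; push_cast at this; linarith
      · have := ihh.2; push_cast at this; linarith

open Real intervalIntegral in
theorem int01 : ∫ x in (0:ℝ)..1, Real.sqrt (1 - x^2) = Real.pi / 4 := by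
  have heven : (∫ x in (-1:ℝ)..0, Real.sqrt (1 - x^2)) = ∫ x in (0:ℝ)..1, Real.sqrt (1 - x^2) := by
    have := intervalIntegral.integral_comp_neg (a := (0:ℝ)) (b := 1) (fun x => Real.sqrt (1 - x^2))
    simp only [neg_zero, neg_sq] at this
    rw [← this]
  have hint : ∀ a b : ℝ, IntervalIntegrable (fun x => Real.sqrt (1 - x^2)) MeasureTheory.volume a b := by
    intro a b
    exact (Real.continuous_sqrt.comp (by continuity)).intervalIntegrable a b
  have hsplit := intervalIntegral.integral_add_adjacent_intervals (a := (-1:ℝ)) (b := 0) (c := 1)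
    (f := fun x => Real.sqrt (1 - x^2)) (hint _ _) (hint _ _)
  have hfull : (∫ x in (-1:ℝ)..1, Real.sqrt (1 - x^2)) = Real.pi / 2 := integral_sqrt_one_sub_sq
  rw [← hsplit, heven] at hfull
  linarith

theorem intm (m : ℝ) (hm : 0 < m) :
    ∫ x in (0:ℝ)..m, Real.sqrt (m^2 - x^2) = Real.pi * m^2 / 4 := by
  have h1 : ∀ t : ℝ, Real.sqrt (m^2 - (m*t)^2) = m * Real.sqrt (1 - t^2) := by
    intro t
    rw [show m^2 - (m*t)^2 = m^2 * (1 - t^2) by ring, Real.sqrt_mul (by positivity),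
      Real.sqrt_sq hm.le]
  have h2 := intervalIntegral.smul_integral_comp_mul_left (a := (0:ℝ)) (b := 1)
    (f := fun x => Real.sqrt (m^2 - x^2)) m
  simp only [mul_zero, mul_one, h1] at h2
  rw [← h2, intervalIntegral.integral_const_mul, int01]
  simp [smul_eq_mul]; ring

theorem anti (m : ℕ) : AntitoneOn (fun x : ℝ => Real.sqrt ((m:ℝ)^2 - x^2)) (Set.Icc (0:ℝ) m) := by
  intro x hx y hy hxy
  apply Real.sqrt_le_sqrt
  nlinarith [hx.1, hy.1]

theorem sumL (m : ℕ) :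
    Real.pi * (m:ℝ)^2 / 4 ≤ ∑ v ∈ Finset.range m, Real.sqrt ((m:ℝ)^2 - (v:ℝ)^2) := by
  rcases Nat.eq_zero_or_pos m with h | h
  · simp [h]
  have := AntitoneOn.integral_le_sum (x₀ := 0) (a := m)
    (f := fun x : ℝ => Real.sqrt ((m:ℝ)^2 - x^2)) (by simpa using anti m)
  simp only [zero_add] at this
  calc Real.pi * (m:ℝ)^2 / 4 = ∫ x in (0:ℝ)..m, Real.sqrt ((m:ℝ)^2 - x^2) :=
        (intm m (by exact_mod_cast h)).symm
    _ ≤ _ := this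

theorem sumU (m : ℕ) (hm : 1 ≤ m) :
    ∑ v ∈ Finset.range m, Real.sqrt ((m:ℝ)^2 - (v:ℝ)^2) ≤ Real.pi * (m:ℝ)^2 / 4 + m := by
  obtain ⟨k, rfl⟩ : ∃ k, m = k + 1 := ⟨m - 1, (Nat.succ_pred_eq_of_pos hm).symm⟩
  set m := k + 1
  rw [Finset.sum_range_succ']
  have h1 := AntitoneOn.sum_le_integral (x₀ := 0) (a := k)
    (f := fun x : ℝ => Real.sqrt ((m:ℝ)^2 - x^2))
    (by apply (anti m).mono; apply Set.Icc_subset_Icc le_rfl; simp [m])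
  simp only [zero_add] at h1
  have h2 : (∫ x in (0:ℝ)..(k:ℝ), Real.sqrt ((m:ℝ)^2 - x^2))
      ≤ ∫ x in (0:ℝ)..(m:ℝ), Real.sqrt ((m:ℝ)^2 - x^2) := by
    have hint : ∀ a b : ℝ, IntervalIntegrable (fun x => Real.sqrt ((m:ℝ)^2 - x^2))
        MeasureTheory.volume a b := fun a b =>
      (Real.continuous_sqrt.comp (by continuity)).intervalIntegrable a b
    have := intervalIntegral.integral_add_adjacent_intervals (a := (0:ℝ)) (b := k) (c := m)
      (f := fun x => Real.sqrt ((m:ℝ)^2 - x^2)) (hint _ _) (hint _ _)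
    have hnn : 0 ≤ ∫ x in (k:ℝ)..(m:ℝ), Real.sqrt ((m:ℝ)^2 - x^2) :=
      intervalIntegral.integral_nonneg (by exact_mod_cast Nat.le_succ k)
        (fun x _ => Real.sqrt_nonneg _)
    linarith
  have h3 : Real.sqrt ((m:ℝ)^2 - ((0:ℕ):ℝ)^2) = m := by
    simp [Real.sqrt_sq]
  rw [intm m (by positivity)] at h2
  push_cast at h1 h3 ⊢
  rw [h3]
  push_cast at h2
  linarith

lemma final_y {r : ℕ} (hr : 1 ≤ r) :
    (r:ℤ) - 1 ≤ (sigPt r (2*r-1)).2 ∧ (sigPt r (2*r-1)).2 ≤ (r:ℤ) + 1 := by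
  have hN : ((2*r-1 : ℕ):ℤ) = 2*(r:ℤ) - 1 := by push_cast [hr]; omega
  have hinvN := inv hr (2*r-1) (by omega)
  have hy0 := y_nonneg r (2*r-1)
  have hM : 2*r-1 = (2*r-2) + 1 := by omega
  have hinvM := inv hr (2*r-2) (by push_cast [hr]; omega)
  have hxM : 1 ≤ (sigPt r (2*r-2)).1 := x_pos (by push_cast [hr]; omega) hinvM
  have hx0 : 0 ≤ (sigPt r (2*r-1)).1 := by
    rw [hM, pt_succ]
    split_ifs <;> dsimp only <;> omega
  have hxadd := x_add r (2*r-1)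
  rw [hN] at hxadd
  constructor
  · omega
  · nlinarith [hinvN.2, hy0, hinvN.1]

lemma main_bounds {r : ℕ} (hr : 1 ≤ r) :
    Real.pi * ((r:ℝ)-1)^2 / 4 ≤ (sigArea r (2*r-1) : ℝ) ∧
    (sigArea r (2*r-1) : ℝ) ≤ Real.pi * ((r:ℝ)+1)^2 / 4 + ((r:ℝ)+1) := by
  have hy := final_y hr
  have hy0 := y_nonneg r (2*r-1)
  have hab := area_bounds hr (2*r-1) (by push_cast [hr]; omega)
  set k := (sigPt r (2*r-1)).2.toNat with hk
  have hk1 : r - 1 ≤ k := by omega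
  have hk2 : k ≤ r + 1 := by omega
  have hr1 : (1:ℝ) ≤ (r:ℝ) := by exact_mod_cast hr
  constructor
  · have hsub : ∑ v ∈ Finset.range (r-1), Real.sqrt (((r:ℝ)-1)^2 - (v:ℝ)^2)
        ≤ ∑ v ∈ Finset.range k, Real.sqrt (((r:ℝ)-1)^2 - (v:ℝ)^2) :=
      Finset.sum_le_sum_of_subset_of_nonneg (Finset.range_subset_range.mpr hk1)
        (fun i _ _ => Real.sqrt_nonneg _)
    have hcast : (((r-1 : ℕ)):ℝ) = (r:ℝ) - 1 := by push_cast [hr]; ring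
    have hL := sumL (r-1)
    rw [hcast] at hL
    linarith [hab.1]
  · have hsub : ∑ v ∈ Finset.range k, Real.sqrt (((r:ℝ)+1)^2 - (v:ℝ)^2)
        ≤ ∑ v ∈ Finset.range (r+1), Real.sqrt (((r:ℝ)+1)^2 - (v:ℝ)^2) :=
      Finset.sum_le_sum_of_subset_of_nonneg (Finset.range_subset_range.mpr hk2)
        (fun i _ _ => Real.sqrt_nonneg _)
    have hU := sumU (r+1) (by omega)
    have hcast : (((r+1 : ℕ)):ℝ) = (r:ℝ) + 1 := by push_cast; ring
    rw [hcast] at hU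
    linarith [hab.2]

end SigAux


/-- The area `𝒜_{2r-1}` enclosed by the digital quarter circle of radius `r` produced by
the signum algorithm satisfies `lim_{r→∞} 𝒜_{2r-1}/r² = π/4`. -/
theorem sigArea_tendsto_pi_div_four :
    Tendsto (fun r : ℕ => (sigArea r (2 * r - 1) : ℝ) / (r : ℝ) ^ 2) atTop
      (nhds (Real.pi / 4)) := by
  have hone : Tendsto (fun r : ℕ => 1/(r:ℝ)) atTop (nhds 0) :=
    tendsto_one_div_atTop_nhds_zero_nat
  have tlow : Tendsto (fun r : ℕ => Real.pi/4 * (1 - 1/(r:ℝ))^2) atTop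
      (nhds (Real.pi/4)) := by
    have h1 : Tendsto (fun r : ℕ => 1 - 1/(r:ℝ)) atTop (nhds 1) := by
      simpa using tendsto_const_nhds.sub hone
    have := (h1.pow 2).const_mul (Real.pi/4)
    simpa using this
  have tup : Tendsto (fun r : ℕ =>
      Real.pi/4 * (1 + 1/(r:ℝ))^2 + (1/(r:ℝ) + (1/(r:ℝ))^2)) atTop
      (nhds (Real.pi/4)) := by
    have h1 : Tendsto (fun r : ℕ => 1 + 1/(r:ℝ)) atTop (nhds 1) := by
      simpa using tendsto_const_nhds.add hone
    have h2 := ((h1.pow 2).const_mul (Real.pi/4)).add (hone.add (hone.pow 2))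
    simpa using h2
  apply tendsto_of_tendsto_of_tendsto_of_le_of_le' tlow tup
  · filter_upwards [eventually_ge_atTop 1] with r hr
    have hr0 : (0:ℝ) < (r:ℝ) := by exact_mod_cast hr
    have h := (SigAux.main_bounds hr).1
    calc Real.pi/4 * (1 - 1/(r:ℝ))^2 = Real.pi * ((r:ℝ)-1)^2 / 4 / (r:ℝ)^2 := by
          first | (field_simp; ring) | field_simp
      _ ≤ (sigArea r (2*r-1) : ℝ) / (r:ℝ)^2 := by gcongr
  · filter_upwards [eventually_ge_atTop 1] with r hr
    have hr0 : (0:ℝ) < (r:ℝ) := by exact_mod_cast hr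
    have h := (SigAux.main_bounds hr).2
    calc (sigArea r (2*r-1) : ℝ) / (r:ℝ)^2
        ≤ (Real.pi * ((r:ℝ)+1)^2 / 4 + ((r:ℝ)+1)) / (r:ℝ)^2 := by gcongr
      _ = Real.pi/4 * (1 + 1/(r:ℝ))^2 + (1/(r:ℝ) + (1/(r:ℝ))^2) := by
          first | (field_simp; ring) | field_simp
end

section
/- Fix an integer r ≥ 1 and let x, y, s be the sequences produced by the signum algorithm for radius r, and let a_n = x_n + y_n be the Manhattan distance of the n-th path point to the origin. Then the reciprocal of the harmonic mean H(π_n) of the π-values π_n(r) = 4r/a_n converges as r → ∞: lim_{r→∞} 1/H(π_n) = lim_{r→∞} (1/(8r²)) · Σ_{n=0}^{2r−1} a_n = π/16 + 1/8, the limit being taken over positive integers r tending to infinity. -/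
open Filter

/-! The signum algorithm always moves to whichever of its two candidate points is nearer to the
circle of radius `r`, so the path stays in the annulus `|r - ‖p‖| ≤ 1` up to `n = 2r - 1`. As
`x_n - y_n = r - n`, this gives `a_n² = 2‖p_n‖² - (n - r)²` between `2(r - 1)² - (n - r)²` and
`2(r + 1)² - (n - r)²`, so `Σ a_n` is squeezed between the sums of `t ↦ √(c² - (t - r)²)` over
`t = 0, …, 2r - 1` for `c = √2 (r ∓ 1)`. Such a sum differs by at most `c` from the integral
`r √(c² - r²) + c² arcsin (r / c)`, and after division by `8r²` both bounds tend to
`(1 + 2 arcsin (1 / √2)) / 8 = π / 16 + 1 / 8`. -/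

open Real Topology

theorem abs_sub_sqrt_le_iff {ρ δ u : ℝ} (hδ : 0 ≤ δ) (hδρ : δ ≤ ρ) (hu : 0 ≤ u) :
    |ρ - √u| ≤ δ ↔ (ρ - δ) ^ 2 ≤ u ∧ u ≤ (ρ + δ) ^ 2 := by
  rw [abs_le, ← le_sqrt (by linarith) hu, ← sqrt_le_left (by linarith)]
  constructor <;> rintro ⟨h₁, h₂⟩ <;> constructor <;> linarith

theorem add_eq_sqrt_two_mul_sub_sq {a b : ℝ} (h : 0 ≤ a + b) :
    a + b = √(2 * (a ^ 2 + b ^ 2) - (a - b) ^ 2) := by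
  rw [show 2 * (a ^ 2 + b ^ 2) - (a - b) ^ 2 = (a + b) ^ 2 by ring, sqrt_sq h]

theorem abs_sum_Ico_sub_integral_le_of_unimodal {f : ℝ → ℝ} {k m l : ℕ} (hkm : k ≤ m)
    (hml : m ≤ l) (hmono : MonotoneOn f (Set.Icc k m)) (hanti : AntitoneOn f (Set.Icc m l))
    (hk : 0 ≤ f k) (hl : 0 ≤ f l) :
    |∑ i ∈ Finset.Ico k l, f i - ∫ x in (k : ℝ)..l, f x| ≤ f m := by
  have hkm' : (k : ℝ) ≤ m := by exact_mod_cast hkm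
  have hml' : (m : ℝ) ≤ l := by exact_mod_cast hml
  have hint := intervalIntegral.integral_add_adjacent_intervals
    (Set.uIcc_of_le hkm' ▸ hmono).intervalIntegrable
    (μ := MeasureTheory.volume) (Set.uIcc_of_le hml' ▸ hanti).intervalIntegrable
  have hsum := Finset.sum_Ico_consecutive (fun i : ℕ => f i) hkm hml
  have htel₁ := Finset.sum_Ico_sub (fun i : ℕ => f i) hkm
  have htel₂ := Finset.sum_Ico_sub (fun i : ℕ => f i) hml
  simp only [Finset.sum_sub_distrib] at htel₁ htel₂
  have h₁ := hmono.sum_le_integral_Ico hkm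
  have h₂ := hmono.integral_le_sum_Ico hkm
  have h₃ := hanti.sum_le_integral_Ico hml
  have h₄ := hanti.integral_le_sum_Ico hml
  rw [abs_le]
  constructor <;> linarith

noncomputable def discStripArea (c R : ℝ) : ℝ :=
  R * √(c ^ 2 - R ^ 2) + c ^ 2 * arcsin (R / c)

theorem discStripArea_neg (c R : ℝ) : discStripArea c (-R) = -discStripArea c R := by
  simp only [discStripArea, neg_sq, neg_div, arcsin_neg]
  ring

theorem hasDerivAt_discStripArea {c t : ℝ} (ht : |t| < c) :
    HasDerivAt (fun t => discStripArea c t / 2) (√(c ^ 2 - t ^ 2)) t := by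
  have hc : 0 < c := (abs_nonneg t).trans_lt ht
  have hw : 0 < c ^ 2 - t ^ 2 := by
    have := sq_lt_sq' (abs_lt.mp ht).1 (abs_lt.mp ht).2; linarith
  have htc : |t / c| < 1 := by rwa [abs_div, abs_of_pos hc, div_lt_one hc]
  have hsqrt : HasDerivAt (fun t => √(c ^ 2 - t ^ 2)) (-(2 * t) / (2 * √(c ^ 2 - t ^ 2))) t := by
    simpa using ((hasDerivAt_pow 2 t).const_sub (c ^ 2)).sqrt hw.ne'
  have harcsin : HasDerivAt (fun t => arcsin (t / c)) (1 / √(1 - (t / c) ^ 2) * (1 / c)) t := by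
    have h := hasDerivAt_arcsin (abs_lt.mp htc).1.ne' (abs_lt.mp htc).2.ne
    exact h.comp t ((hasDerivAt_id' t).div_const c)
  refine ((((hasDerivAt_id' t).mul hsqrt).add (harcsin.const_mul (c ^ 2))).div_const
    2).congr_deriv ?_
  have hs : √(1 - (t / c) ^ 2) = √(c ^ 2 - t ^ 2) / c := by
    rw [show 1 - (t / c) ^ 2 = (c ^ 2 - t ^ 2) / c ^ 2 by field_simp, sqrt_div hw.le,
      sqrt_sq hc.le]
  have hsqrt_pos := sqrt_pos.mpr hw
  rw [hs]
  field_simp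
  rw [sq_sqrt hw.le]
  ring

theorem integral_sqrt_sq_sub_sq {c r : ℝ} (hr : 0 ≤ r) (hrc : r < c) :
    ∫ t in -r..r, √(c ^ 2 - t ^ 2) = discStripArea c r := by
  rw [intervalIntegral.integral_eq_sub_of_hasDerivAt (fun t ht => hasDerivAt_discStripArea ?_)
    ((by fun_prop : Continuous fun t => √(c ^ 2 - t ^ 2)).intervalIntegrable _ _),
    discStripArea_neg]
  · ring
  · rw [Set.uIcc_of_le (by linarith)] at ht
    exact (abs_le.mpr ht).trans_lt hrc

theorem arcsin_inv_sqrt_two : arcsin (√2)⁻¹ = π / 4 := by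
  have h : (√2)⁻¹ = √2 / 2 := by
    field_simp
    exact (sq_sqrt zero_le_two).symm
  rw [h, ← sin_pi_div_four, arcsin_sin] <;> linarith [pi_pos]

theorem discStripArea_mul_div_sq {q R : ℝ} (hR : 0 < R) (e : ℝ) :
    1 / (8 * R ^ 2) * (discStripArea (q * R) R + e * (q * R)) =
      (√(q ^ 2 - 1) + q ^ 2 * arcsin q⁻¹ + e * q * R⁻¹) / 8 := by
  rw [discStripArea, show (q * R) ^ 2 - R ^ 2 = (q ^ 2 - 1) * R ^ 2 by ring,
    sqrt_mul' _ (sq_nonneg R), sqrt_sq hR.le, div_mul_cancel_right₀ hR.ne']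
  field_simp

theorem tendsto_discStripArea_div_sq {c : ℕ → ℝ}
    (hc : Tendsto (fun r : ℕ => c r / r) atTop (𝓝 √2)) (e : ℝ) :
    Tendsto (fun r : ℕ => 1 / (8 * (r : ℝ) ^ 2) * (discStripArea (c r) r + e * c r))
      atTop (𝓝 (π / 16 + 1 / 8)) := by
  have hlim : Tendsto (fun r : ℕ => (√((c r / r) ^ 2 - 1) + (c r / r) ^ 2 * arcsin (c r / r)⁻¹
      + e * (c r / r) * (r : ℝ)⁻¹) / 8) atTop
      (𝓝 ((√(√2 ^ 2 - 1) + √2 ^ 2 * arcsin (√2)⁻¹ + e * √2 * 0) / 8)) := by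
    have hsqrt2 : (√2 : ℝ) ≠ 0 := by positivity
    refine Tendsto.div_const (Tendsto.add ?_ ((hc.const_mul e).mul
      tendsto_inv_atTop_nhds_zero_nat)) 8
    exact ((continuous_sqrt.tendsto _).comp ((hc.pow 2).sub_const 1)).add
      ((hc.pow 2).mul ((continuous_arcsin.tendsto _).comp (hc.inv₀ hsqrt2)))
  have hval : (√(√2 ^ 2 - 1) + √2 ^ 2 * arcsin (√2)⁻¹ + e * √2 * 0) / 8 = π / 16 + 1 / 8 := by
    rw [sq_sqrt zero_le_two, arcsin_inv_sqrt_two]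
    norm_num
    ring
  rw [← hval]
  refine hlim.congr' ?_
  filter_upwards [eventually_gt_atTop 0] with r hr
  symm
  have hR : (0 : ℝ) < r := by exact_mod_cast hr
  have hcr : c r = c r / r * r := by field_simp
  rw [hcr, discStripArea_mul_div_sq hR, ← hcr]

theorem abs_sum_sqrt_sub_discStripArea_le (r : ℕ) {c : ℝ} (hrc : (r : ℝ) < c) :
    |∑ n ∈ Finset.range (2 * r), √(c ^ 2 - ((n : ℝ) - r) ^ 2) - discStripArea c r| ≤ c := by
  have hc : 0 < c := (Nat.cast_nonneg r).trans_lt hrc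
  have hint : ∫ t in ((0 : ℕ) : ℝ)..((2 * r : ℕ) : ℝ), √(c ^ 2 - (t - r) ^ 2) =
      discStripArea c r := by
    rw [intervalIntegral.integral_comp_sub_right (fun t => √(c ^ 2 - t ^ 2))]
    push_cast
    rw [zero_sub, show 2 * (r : ℝ) - r = r by ring]
    exact integral_sqrt_sq_sub_sq (Nat.cast_nonneg r) hrc
  have hmono : MonotoneOn (fun t : ℝ => √(c ^ 2 - (t - r) ^ 2)) (Set.Icc ((0 : ℕ) : ℝ) r) := by
    intro a ha b hb hab
    simp only [Set.mem_Icc] at ha hb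
    exact sqrt_le_sqrt (by nlinarith)
  have hanti :
      AntitoneOn (fun t : ℝ => √(c ^ 2 - (t - r) ^ 2)) (Set.Icc (r : ℝ) ((2 * r : ℕ) : ℝ)) := by
    intro a ha b hb hab
    simp only [Set.mem_Icc] at ha hb
    exact sqrt_le_sqrt (by nlinarith)
  have h := abs_sum_Ico_sub_integral_le_of_unimodal (Nat.zero_le r) (by omega) hmono hanti
    (sqrt_nonneg _) (sqrt_nonneg _)
  rwa [hint, ← Finset.range_eq_Ico, sub_self, zero_pow two_ne_zero, sub_zero, sqrt_sq hc.le] at h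

noncomputable def radialError (r : ℕ) (p : ℤ × ℤ) : ℝ :=
  |(r : ℝ) - √((p.1 : ℝ) ^ 2 + (p.2 : ℝ) ^ 2)|

theorem radialError_le_one_iff {r : ℕ} (hr : 1 ≤ r) (p : ℤ × ℤ) :
    radialError r p ≤ 1 ↔
      ((r : ℤ) - 1) ^ 2 ≤ p.1 ^ 2 + p.2 ^ 2 ∧ p.1 ^ 2 + p.2 ^ 2 ≤ ((r : ℤ) + 1) ^ 2 := by
  rw [radialError, abs_sub_sqrt_le_iff zero_le_one (by exact_mod_cast hr) (by positivity)]
  norm_cast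

theorem sigDelta_eq_radialError_sub (r : ℕ) (x y : ℤ) :
    sigDelta r x y = radialError r (x - 1, y) - radialError r (x, y + 1) := by
  simp [sigDelta, radialError]

theorem sigPt_succ_eq_or (r n : ℕ) :
    sigPt r (n + 1) = ((sigPt r n).1 - 1, (sigPt r n).2) ∨
      sigPt r (n + 1) = ((sigPt r n).1, (sigPt r n).2 + 1) := by
  rw [sigPt]
  split_ifs <;> simp

theorem radialError_sigPt_succ (r n : ℕ) :
    radialError r (sigPt r (n + 1)) =
      min (radialError r ((sigPt r n).1 - 1, (sigPt r n).2))
        (radialError r ((sigPt r n).1, (sigPt r n).2 + 1)) := by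
  simp only [sigPt, sigStep, sigDelta_eq_radialError_sub, sub_nonpos]
  split_ifs with h h' <;> simp_all [le_of_lt]

theorem sigPt_fst_sub_snd (r n : ℕ) : (sigPt r n).1 - (sigPt r n).2 = r - n := by
  induction n with
  | zero => simp [sigPt]
  | succ n ih => rcases sigPt_succ_eq_or r n with h | h <;> rw [h] <;> push_cast <;> linarith

theorem sigPt_snd_nonneg (r n : ℕ) : 0 ≤ (sigPt r n).2 := by
  induction n with
  | zero => simp [sigPt]
  | succ n ih => rcases sigPt_succ_eq_or r n with h | h <;> rw [h] <;> dsimp only <;> omega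

theorem sigPt_fst_le (r n : ℕ) : (sigPt r n).1 ≤ r := by
  induction n with
  | zero => simp [sigPt]
  | succ n ih => rcases sigPt_succ_eq_or r n with h | h <;> rw [h] <;> dsimp only <;> omega

theorem min_radialError_le_one {r : ℕ} {x y : ℤ} (hr : 1 ≤ r) (hx : 1 ≤ x) (hxr : x ≤ r)
    (hy : 0 ≤ y) (h : radialError r (x, y) ≤ 1) :
    min (radialError r (x - 1, y)) (radialError r (x, y + 1)) ≤ 1 := by
  rw [radialError_le_one_iff hr] at h
  obtain ⟨hlo, hhi⟩ := h
  -- On or outside the circle the left neighbour stays in the annulus, inside it the upper one.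
  by_cases hout : (r : ℤ) ^ 2 ≤ x ^ 2 + y ^ 2
  · refine min_le_of_left_le ((radialError_le_one_iff hr _).mpr ⟨?_, ?_⟩) <;> dsimp only <;>
      nlinarith
  · have hyr : y < r := by nlinarith
    refine min_le_of_right_le ((radialError_le_one_iff hr _).mpr ⟨?_, ?_⟩) <;> dsimp only <;>
      nlinarith

theorem sigPt_mem_annulus {r : ℕ} (hr : 1 ≤ r) :
    ∀ n < 2 * r, 0 ≤ (sigPt r n).1 ∧ radialError r (sigPt r n) ≤ 1 := by
  intro n
  induction n with
  | zero => simp [sigPt, radialError]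
  | succ n ih =>
    intro hn
    obtain ⟨-, herr⟩ := ih (by omega)
    have hrel := sigPt_fst_sub_snd r n
    have hy := sigPt_snd_nonneg r n
    -- `x_n = 0` would force `y_n ≥ r - 1`, i.e. `n ≥ 2r - 1`.
    have hx1 : 1 ≤ (sigPt r n).1 := by
      by_contra hx0
      have hlo := ((radialError_le_one_iff hr _).mp herr).1
      rw [show (sigPt r n).1 = 0 by omega] at hlo
      nlinarith
    refine ⟨?_, (radialError_sigPt_succ r n).trans_le
      (min_radialError_le_one hr hx1 (sigPt_fst_le r n) hy herr)⟩
    rcases sigPt_succ_eq_or r n with h | h <;> rw [h] <;> dsimp only <;> omega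

theorem sigPt_manhattan_mem_Icc {r n : ℕ} (hr : 1 ≤ r) (hn : n < 2 * r) :
    (((sigPt r n).1 + (sigPt r n).2 : ℤ) : ℝ) ∈
      Set.Icc (√(2 * ((r : ℝ) - 1) ^ 2 - ((n : ℝ) - r) ^ 2))
        (√(2 * ((r : ℝ) + 1) ^ 2 - ((n : ℝ) - r) ^ 2)) := by
  obtain ⟨hx, herr⟩ := sigPt_mem_annulus hr n hn
  obtain ⟨hlo, hhi⟩ := (radialError_le_one_iff hr _).mp herr
  have hrel : ((sigPt r n).1 : ℝ) - (sigPt r n).2 = -((n : ℝ) - r) := by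
    rw [neg_sub]; exact_mod_cast sigPt_fst_sub_snd r n
  have hy := sigPt_snd_nonneg r n
  rw [Int.cast_add, add_eq_sqrt_two_mul_sub_sq (a := ((sigPt r n).1 : ℝ)) (by positivity), hrel,
    neg_sq]
  have hlo' : ((r : ℝ) - 1) ^ 2 ≤ ((sigPt r n).1 : ℝ) ^ 2 + ((sigPt r n).2 : ℝ) ^ 2 := by
    exact_mod_cast hlo
  have hhi' : ((sigPt r n).1 : ℝ) ^ 2 + ((sigPt r n).2 : ℝ) ^ 2 ≤ ((r : ℝ) + 1) ^ 2 := by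
    exact_mod_cast hhi
  constructor <;> gcongr

theorem sum_sigPt_manhattan_mem_Icc {r : ℕ} (hr : 1 ≤ r) :
    ∑ n ∈ Finset.range (2 * r), (((sigPt r n).1 + (sigPt r n).2 : ℤ) : ℝ) ∈
      Set.Icc (∑ n ∈ Finset.range (2 * r), √((√2 * ((r : ℝ) - 1)) ^ 2 - ((n : ℝ) - r) ^ 2))
        (∑ n ∈ Finset.range (2 * r), √((√2 * ((r : ℝ) + 1)) ^ 2 - ((n : ℝ) - r) ^ 2)) := by
  simp only [mul_pow, sq_sqrt zero_le_two]
  constructor <;> refine Finset.sum_le_sum fun n hn => ?_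
  · exact (sigPt_manhattan_mem_Icc hr (Finset.mem_range.mp hn)).1
  · exact (sigPt_manhattan_mem_Icc hr (Finset.mem_range.mp hn)).2

theorem tendsto_mul_add_div_natCast (a e : ℝ) :
    Tendsto (fun r : ℕ => a * (r + e) / r) atTop (𝓝 a) := by
  have h := (((tendsto_const_nhds (x := e)).div_atTop tendsto_natCast_atTop_atTop).const_add
    1).const_mul a
  rw [add_zero, mul_one] at h
  refine h.congr' ?_
  filter_upwards [eventually_gt_atTop 0] with r hr
  field_simp

/-- The reciprocal of the harmonic mean of the π-values `π_n(r) = 4r/a_n`, where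
`a_n = x_n + y_n` is the Manhattan distance of the `n`-th point of the digital quarter
circle to the origin, converges:
`lim_{r→∞} 1/H(π_n) = lim_{r→∞} (1/(8r²)) Σ_{n=0}^{2r-1} a_n = π/16 + 1/8`. -/
theorem sig_harmonic_mean_reciprocal_tendsto :
    Tendsto
      (fun r : ℕ => (1 / (8 * (r : ℝ) ^ 2)) *
        ∑ n ∈ Finset.range (2 * r), (((sigPt r n).1 + (sigPt r n).2 : ℤ) : ℝ))
      atTop (nhds (Real.pi / 16 + 1 / 8)) := by
  have hsqrt2 : (1.4 : ℝ) < √2 := by rw [lt_sqrt (by norm_num)]; norm_num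
  refine tendsto_of_tendsto_of_tendsto_of_le_of_le'
    (tendsto_discStripArea_div_sq (tendsto_mul_add_div_natCast √2 (-1)) (-1))
    (tendsto_discStripArea_div_sq (tendsto_mul_add_div_natCast √2 1) 1) ?_ ?_ <;>
    filter_upwards [eventually_ge_atTop 4] with r hr <;>
    have hr' : (4 : ℝ) ≤ r := by exact_mod_cast hr
  · simp only [← sub_eq_add_neg, neg_one_mul]
    have harea := abs_sum_sqrt_sub_discStripArea_le r (c := √2 * (r - 1)) (by nlinarith)
    gcongr
    linarith [(abs_le.mp harea).1, (sum_sigPt_manhattan_mem_Icc (r := r) (by omega)).1]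
  · have harea := abs_sum_sqrt_sub_discStripArea_le r (c := √2 * (r + 1)) (by nlinarith)
    gcongr
    linarith [(abs_le.mp harea).2, (sum_sigPt_manhattan_mem_Icc (r := r) (by omega)).2]
end
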